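/- arXiv:1204.6006 — 7 statements merged into one kernel-verified Lean document; each statement's English description precedes it below -/
import Mathlib

section
/- Let u : [0,∞) × ℝ² → ℝ² be a smooth, divergence-free, time-dependent vector field such that τ ↦ ‖u(τ)‖_LL is locally integrable, and let ψ be its flow, i.e. ∂ₜψ(t,x) = u(t, ψ(t,x)) and ψ(0,x) = x for all x ∈ ℝ². Then for every t ≥ 0 one has ‖ψ(t,·)‖_* ≤ exp(∫₀ᵗ ‖u(τ)‖_LL dτ), i.e. Φ(|ψ(t,x) − ψ(t,y)|, |x − y|) ≤ exp(∫₀ᵗ ‖u(τ)‖_LL dτ) for all x ≠ y. -/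
open MeasureTheory Metric Real
open scoped ENNReal RealInnerProductSpace

noncomputable section

abbrev E2 := EuclideanSpace ℝ (Fin 2)

/-- The comparison function `Φ`. -/
def Phi (r s : ℝ) : ℝ :=
  if 0 ≤ (1 - s) * (1 - r) then
    max ((1 + |Real.log s|) / (1 + |Real.log r|)) ((1 + |Real.log r|) / (1 + |Real.log s|))
  else (1 + |Real.log s|) * (1 + |Real.log r|)

/-- The log-Lipschitz seminorm of a vector field, as a supremum in `[0,∞]`. -/
def llNorm (v : E2 → E2) : ℝ≥0∞ :=
  ⨆ (x : E2) (y : E2) (_ : x ≠ y),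
    ENNReal.ofReal (dist (v x) (v y) / (dist x y * (1 + |Real.log (dist x y)|)))

/-- Auxiliary primitive `H(a) = sgn(a) log(1+|a|)`. -/
def Hfun (a : ℝ) : ℝ := if 0 ≤ a then Real.log (1 + a) else -Real.log (1 - a)

lemma Hfun_nonneg_eq {a : ℝ} (h : 0 ≤ a) : Hfun a = Real.log (1 + |a|) := by
  simp [Hfun, h, abs_of_nonneg h]

lemma Hfun_nonpos_eq {a : ℝ} (h : a ≤ 0) : Hfun a = -Real.log (1 + |a|) := by
  rcases h.lt_or_eq with h' | rfl
  · rw [Hfun, if_neg (not_le.2 h'), abs_of_neg h', ← sub_eq_add_neg]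
  · simp [Hfun]

lemma log_one_add_bounds {c : ℝ} (hc : 0 ≤ c) :
    c - c ^ 2 ≤ Real.log (1 + c) ∧ Real.log (1 + c) ≤ c := by
  have h1 : (0:ℝ) < 1 + c := by linarith
  constructor
  · have h2 := Real.one_sub_inv_le_log_of_pos h1
    have h3 : (1 + c) * (1 + c)⁻¹ = 1 := mul_inv_cancel₀ h1.ne'
    nlinarith [pow_nonneg hc 3, sq_nonneg c]
  · have := Real.log_le_sub_one_of_pos h1; linarith

lemma abs_Hfun_sub_le (b : ℝ) : |Hfun b - b| ≤ b ^ 2 := by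
  rcases le_or_gt 0 b with hb | hb
  · have h := log_one_add_bounds hb
    rw [Hfun, if_pos hb, abs_le]
    constructor <;> nlinarith [h.1, h.2]
  · have hc : 0 ≤ -b := by linarith
    have h := log_one_add_bounds hc
    rw [Hfun, if_neg (not_le.2 hb)]
    have h2 : (1:ℝ) - b = 1 + -b := by ring
    rw [h2, abs_le]
    constructor <;> nlinarith [h.1, h.2]

lemma hasDerivAt_Hfun (a : ℝ) : HasDerivAt Hfun (1 + |a|)⁻¹ a := by
  rcases lt_trichotomy a 0 with ha | rfl | ha
  · have h2 : HasDerivAt (fun x : ℝ => (1:ℝ) - x) (-1) a := (hasDerivAt_id a).const_sub 1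
    have h3 := (h2.log (by linarith : (1:ℝ) - a ≠ 0)).neg
    have hev : Hfun =ᶠ[nhds a] fun x : ℝ => -Real.log (1 - x) := by
      filter_upwards [eventually_lt_nhds ha] with b hb
      simp [Hfun, not_le.2 hb]
    have := h3.congr_of_eventuallyEq hev
    refine this.congr_deriv ?_
    rw [abs_of_neg ha, ← sub_eq_add_neg]
    field_simp
  · have h0 : (1 + |(0:ℝ)|)⁻¹ = 1 := by norm_num
    rw [h0, hasDerivAt_iff_isLittleO]
    have hH0 : Hfun 0 = 0 := by simp [Hfun]
    simp only [hH0, sub_zero, smul_eq_mul, mul_one]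
    rw [Asymptotics.isLittleO_iff]
    intro c hc
    rw [Metric.eventually_nhds_iff]
    refine ⟨c, hc, fun b hb => ?_⟩
    rw [Real.dist_eq, sub_zero] at hb
    have h2 := abs_Hfun_sub_le b
    calc ‖Hfun b - b‖ = |Hfun b - b| := rfl
      _ ≤ b ^ 2 := h2
      _ = |b| * |b| := by rw [← sq_abs]; ring
      _ ≤ c * |b| := by nlinarith [abs_nonneg b]
      _ = c * ‖b‖ := rfl
  · have h2 : HasDerivAt (fun x : ℝ => (1:ℝ) + x) 1 a := (hasDerivAt_id a).const_add 1
    have h3 := h2.log (by linarith : (1:ℝ) + a ≠ 0)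
    have hev : Hfun =ᶠ[nhds a] fun x : ℝ => Real.log (1 + x) := by
      filter_upwards [eventually_gt_nhds ha] with b hb
      simp [Hfun, hb.le]
    have := h3.congr_of_eventuallyEq hev
    refine this.congr_deriv ?_
    rw [abs_of_pos ha]
    field_simp

lemma max_div_le_exp {A B : ℝ} (hA : 0 < A) (hB : 0 < B) :
    max (B / A) (A / B) ≤ Real.exp |Real.log A - Real.log B| := by
  apply max_le
  · have : B / A = Real.exp (Real.log B - Real.log A) := by
      rw [Real.exp_sub, Real.exp_log hA, Real.exp_log hB]
    rw [this]
    exact Real.exp_le_exp.2 ((le_abs_self _).trans_eq (abs_sub_comm _ _))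
  · have : A / B = Real.exp (Real.log A - Real.log B) := by
      rw [Real.exp_sub, Real.exp_log hA, Real.exp_log hB]
    rw [this]
    exact Real.exp_le_exp.2 (le_abs_self _)

lemma Phi_le_exp {r s : ℝ} (hr : 0 < r) (hs : 0 < s) :
    Phi r s ≤ Real.exp |Hfun (Real.log r) - Hfun (Real.log s)| := by
  have hA : (0:ℝ) < 1 + |Real.log r| := by positivity
  have hB : (0:ℝ) < 1 + |Real.log s| := by positivity
  unfold Phi
  split_ifs with h
  · rcases mul_nonneg_iff.1 h with ⟨h1, h2⟩ | ⟨h1, h2⟩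
    · -- s ≤ 1 and r ≤ 1
      have hlr : Real.log r ≤ 0 := Real.log_nonpos hr.le (by linarith)
      have hls : Real.log s ≤ 0 := Real.log_nonpos hs.le (by linarith)
      rw [Hfun_nonpos_eq hlr, Hfun_nonpos_eq hls]
      have he : |-Real.log (1 + |Real.log r|) - -Real.log (1 + |Real.log s|)|
          = |Real.log (1 + |Real.log r|) - Real.log (1 + |Real.log s|)| := by
        rw [neg_sub_neg, abs_sub_comm]
      rw [he]
      exact max_div_le_exp hA hB
    · -- 1 ≤ s and 1 ≤ r
      have hlr : 0 ≤ Real.log r := Real.log_nonneg (by linarith)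
      have hls : 0 ≤ Real.log s := Real.log_nonneg (by linarith)
      rw [Hfun_nonneg_eq hlr, Hfun_nonneg_eq hls]
      exact max_div_le_exp hA hB
  · push_neg at h
    rcases mul_neg_iff.1 h with ⟨h1, h2⟩ | ⟨h1, h2⟩
    · -- s < 1 and 1 < r
      have hlr : 0 ≤ Real.log r := Real.log_nonneg (by linarith)
      have hls : Real.log s ≤ 0 := Real.log_nonpos hs.le (by linarith)
      rw [Hfun_nonneg_eq hlr, Hfun_nonpos_eq hls, sub_neg_eq_add,
        abs_of_nonneg (add_nonneg (Real.log_nonneg (by linarith [abs_nonneg (Real.log r)]))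
          (Real.log_nonneg (by linarith [abs_nonneg (Real.log s)])))]
      rw [Real.exp_add, Real.exp_log hA, Real.exp_log hB]
      exact (mul_comm _ _).le
    · -- 1 < s and r < 1
      have hlr : Real.log r ≤ 0 := Real.log_nonpos hr.le (by linarith)
      have hls : 0 ≤ Real.log s := Real.log_nonneg (by linarith)
      rw [Hfun_nonpos_eq hlr, Hfun_nonneg_eq hls]
      have he : |-Real.log (1 + |Real.log r|) - Real.log (1 + |Real.log s|)|
          = Real.log (1 + |Real.log r|) + Real.log (1 + |Real.log s|) := by
        rw [abs_sub_comm, sub_neg_eq_add,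
          abs_of_nonneg (add_nonneg (Real.log_nonneg (by linarith [abs_nonneg (Real.log s)]))
            (Real.log_nonneg (by linarith [abs_nonneg (Real.log r)])))]
        ring
      rw [he, Real.exp_add, Real.exp_log hA, Real.exp_log hB]
      exact (mul_comm _ _).le

lemma intervalIntegrable_refl (f : ℝ → ℝ) (a : ℝ) : IntervalIntegrable f volume a a := by
  rw [intervalIntegrable_iff]
  simp only [Set.uIoc, min_self, max_self, Set.Ioc_self]
  exact integrableOn_empty

lemma key_gronwall (L : ℝ → ℝ) (w w' : ℝ → E2)
    (hw' : ∀ τ, HasDerivAt w (w' τ) τ) (hw'c : Continuous w')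
    (s : ℝ) (hs : 0 ≤ s)
    (hw0 : ∀ τ ∈ Set.Icc 0 s, w τ ≠ 0)
    (hL : ∀ τ ∈ Set.Icc 0 s, ‖w' τ‖ ≤ L τ * (‖w τ‖ * (1 + |Real.log ‖w τ‖|)))
    (hLint : IntervalIntegrable L volume 0 s) :
    |Hfun (Real.log ‖w s‖) - Hfun (Real.log ‖w 0‖)| ≤ ∫ τ in (0:ℝ)..s, L τ := by
  have hwc : Continuous w := continuous_iff_continuousAt.2 fun τ => (hw' τ).continuousAt
  have huIcc : Set.uIcc (0:ℝ) s = Set.Icc 0 s := Set.uIcc_of_le hs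
  set G : ℝ → ℝ := fun τ => Hfun (Real.log ‖w τ‖) with hG
  set D : ℝ → ℝ := fun τ =>
    (1 + |Real.log ‖w τ‖|)⁻¹ *
      ((⟪w τ, w' τ⟫ + ⟪w' τ, w τ⟫) / (2 * Real.sqrt ⟪w τ, w τ⟫) / ‖w τ‖) with hD
  have hsq : ∀ τ, Real.sqrt ⟪w τ, w τ⟫ = ‖w τ‖ := fun τ => by
    rw [real_inner_self_eq_norm_mul_norm, Real.sqrt_mul_self (norm_nonneg _)]
  -- derivative of G
  have hGderiv : ∀ τ ∈ Set.uIcc (0:ℝ) s, HasDerivAt G (D τ) τ := by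
    intro τ hτ
    rw [huIcc] at hτ
    have hwne : w τ ≠ 0 := hw0 τ hτ
    have hgpos : 0 < ‖w τ‖ := norm_pos_iff.2 hwne
    have hinner : HasDerivAt (fun τ => ⟪w τ, w τ⟫) (⟪w τ, w' τ⟫ + ⟪w' τ, w τ⟫) τ :=
      HasDerivAt.inner ℝ (hw' τ) (hw' τ)
    have hq0 : ⟪w τ, w τ⟫ ≠ 0 := by
      rw [real_inner_self_eq_norm_mul_norm]; positivity
    have hsqrt := hinner.sqrt hq0
    have hnormfun : (fun τ => Real.sqrt ⟪w τ, w τ⟫) = fun τ => ‖w τ‖ := funext hsq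
    rw [hnormfun] at hsqrt
    have hlog := hsqrt.log hgpos.ne'
    have := (hasDerivAt_Hfun (Real.log ‖w τ‖)).comp τ hlog
    exact this
  -- bound on |D|
  have hDb : ∀ τ ∈ Set.Icc (0:ℝ) s, |D τ| ≤ L τ := by
    intro τ hτ
    have hwne : w τ ≠ 0 := hw0 τ hτ
    have hgpos : 0 < ‖w τ‖ := norm_pos_iff.2 hwne
    have hA : (0:ℝ) < 1 + |Real.log ‖w τ‖| := by positivity
    have hnd : |(⟪w τ, w' τ⟫ + ⟪w' τ, w τ⟫) / (2 * Real.sqrt ⟪w τ, w τ⟫)| ≤ ‖w' τ‖ := by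
      rw [abs_div, hsq, abs_of_nonneg (by positivity : (0:ℝ) ≤ 2 * ‖w τ‖),
        div_le_iff₀ (by positivity)]
      calc |⟪w τ, w' τ⟫ + ⟪w' τ, w τ⟫| ≤ |⟪w τ, w' τ⟫| + |⟪w' τ, w τ⟫| := abs_add_le _ _
        _ ≤ ‖w τ‖ * ‖w' τ‖ + ‖w' τ‖ * ‖w τ‖ :=
            add_le_add (abs_real_inner_le_norm _ _) (abs_real_inner_le_norm _ _)
        _ = ‖w' τ‖ * (2 * ‖w τ‖) := by ring
    calc |D τ| = (1 + |Real.log ‖w τ‖|)⁻¹ *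
          (|(⟪w τ, w' τ⟫ + ⟪w' τ, w τ⟫) / (2 * Real.sqrt ⟪w τ, w τ⟫)| / ‖w τ‖) := by
          rw [hD, abs_mul, abs_div, abs_of_nonneg (inv_nonneg.2 hA.le),
            abs_of_nonneg (norm_nonneg _)]
      _ ≤ (1 + |Real.log ‖w τ‖|)⁻¹ * (‖w' τ‖ / ‖w τ‖) := by gcongr
      _ ≤ (1 + |Real.log ‖w τ‖|)⁻¹ *
            ((L τ * (‖w τ‖ * (1 + |Real.log ‖w τ‖|))) / ‖w τ‖) := by
          gcongr
          exact hL τ hτ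
      _ = L τ := by
          rw [show L τ * (‖w τ‖ * (1 + |Real.log ‖w τ‖|)) / ‖w τ‖
              = L τ * (1 + |Real.log ‖w τ‖|) from by
            rw [mul_comm (‖w τ‖), ← mul_assoc, mul_div_assoc, div_self hgpos.ne', mul_one]]
          rw [mul_comm (L τ), ← mul_assoc, inv_mul_cancel₀ hA.ne', one_mul]
  -- continuity / integrability of D
  have hcontD : ContinuousOn D (Set.uIcc (0:ℝ) s) := by
    rw [huIcc]
    have hwne : ∀ τ ∈ Set.Icc (0:ℝ) s, ‖w τ‖ ≠ 0 :=
      fun τ hτ => (norm_pos_iff.2 (hw0 τ hτ)).ne'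
    have h1 : ContinuousOn (fun τ => Real.log ‖w τ‖) (Set.Icc (0:ℝ) s) :=
      ContinuousOn.log hwc.norm.continuousOn hwne
    refine ContinuousOn.mul (ContinuousOn.inv₀ (continuousOn_const.add h1.abs)
      (fun τ hτ => by positivity)) ?_
    refine ContinuousOn.div (ContinuousOn.div ?_ ?_ ?_) hwc.norm.continuousOn hwne
    · exact ((hwc.inner hw'c).add (hw'c.inner hwc)).continuousOn
    · exact (continuous_const.mul ((Real.continuous_sqrt).comp (hwc.inner hwc))).continuousOn
    · intro τ hτ
      show 2 * Real.sqrt ⟪w τ, w τ⟫ ≠ 0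
      rw [hsq τ]
      exact mul_ne_zero two_ne_zero (hwne τ hτ)
  have hDint : IntervalIntegrable D volume 0 s := hcontD.intervalIntegrable
  have hftc := intervalIntegral.integral_eq_sub_of_hasDerivAt hGderiv hDint
  rw [← hftc]
  calc |∫ τ in (0:ℝ)..s, D τ| ≤ ∫ τ in (0:ℝ)..s, |D τ| :=
        intervalIntegral.abs_integral_le_integral_abs hs
    _ ≤ ∫ τ in (0:ℝ)..s, L τ :=
        intervalIntegral.integral_mono_on hs hDint.abs hLint hDb

/-- the flow of a smooth divergence-free vector field with locally integrable
log-Lipschitz norm satisfies `‖ψ(t,·)‖_* ≤ exp(∫₀ᵗ ‖u(τ)‖_LL dτ)`, i.e.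
`Φ(|ψ(t,x) - ψ(t,y)|, |x-y|) ≤ exp(∫₀ᵗ ‖u(τ)‖_LL dτ)` for all `x ≠ y`. -/
theorem flow_star_norm_estimate (u : ℝ → E2 → E2)
    (hu : ContDiff ℝ (⊤ : ℕ∞) (fun q : ℝ × E2 => u q.1 q.2))
    (hdiv : ∀ (t : ℝ) (x : E2),
      ∑ i : Fin 2, fderiv ℝ (u t) x (EuclideanSpace.single i 1) i = 0)
    (hll_fin : ∀ τ : ℝ, llNorm (u τ) ≠ ⊤)
    (hll_int : ∀ T : ℝ, 0 < T →
      IntervalIntegrable (fun τ => (llNorm (u τ)).toReal) volume 0 T)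
    (ψ : ℝ → E2 → E2) (hψ0 : ∀ x, ψ 0 x = x)
    (hψ : ∀ (t : ℝ) (x : E2), HasDerivAt (fun s => ψ s x) (u t (ψ t x)) t) :
    ∀ t : ℝ, 0 ≤ t → ∀ x y : E2, x ≠ y →
      Phi (dist (ψ t x) (ψ t y)) (dist x y) ≤
        Real.exp (∫ τ in (0:ℝ)..t, (llNorm (u τ)).toReal) := by
  intro t ht x y hxy
  set L : ℝ → ℝ := fun τ => (llNorm (u τ)).toReal with hLdef
  have hLnn : ∀ τ, 0 ≤ L τ := fun τ => ENNReal.toReal_nonneg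
  set w : ℝ → E2 := fun τ => ψ τ x - ψ τ y with hwdef
  set w' : ℝ → E2 := fun τ => u τ (ψ τ x) - u τ (ψ τ y) with hw'def
  have hw' : ∀ τ, HasDerivAt w (w' τ) τ := fun τ => (hψ τ x).sub (hψ τ y)
  have hwc : Continuous w := continuous_iff_continuousAt.2 fun τ => (hw' τ).continuousAt
  have hψc : ∀ z : E2, Continuous fun τ => ψ τ z :=
    fun z => continuous_iff_continuousAt.2 fun τ => (hψ τ z).continuousAt
  have huc : Continuous fun q : ℝ × E2 => u q.1 q.2 := hu.continuous
  have hw'c : Continuous w' := by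
    have h1 : Continuous fun τ => u τ (ψ τ x) := huc.comp (continuous_id.prodMk (hψc x))
    have h2 : Continuous fun τ => u τ (ψ τ y) := huc.comp (continuous_id.prodMk (hψc y))
    exact h1.sub h2
  have hw00 : w 0 = x - y := by simp [hwdef, hψ0]
  have hLbound : ∀ τ : ℝ, w τ ≠ 0 → ‖w' τ‖ ≤ L τ * (‖w τ‖ * (1 + |Real.log ‖w τ‖|)) := by
    intro τ hne
    have hptne : ψ τ x ≠ ψ τ y := sub_ne_zero.1 hne
    have hd : dist (ψ τ x) (ψ τ y) = ‖w τ‖ := dist_eq_norm _ _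
    have hgpos : 0 < ‖w τ‖ := norm_pos_iff.2 hne
    have h1 : ENNReal.ofReal (dist (u τ (ψ τ x)) (u τ (ψ τ y)) /
        (dist (ψ τ x) (ψ τ y) * (1 + |Real.log (dist (ψ τ x) (ψ τ y))|))) ≤ llNorm (u τ) :=
      le_iSup_of_le (ψ τ x) (le_iSup_of_le (ψ τ y) (le_iSup_of_le hptne le_rfl))
    have h2 := (ENNReal.ofReal_le_iff_le_toReal (hll_fin τ)).1 h1
    rw [hd] at h2
    rw [div_le_iff₀ (by positivity)] at h2
    calc ‖w' τ‖ = dist (u τ (ψ τ x)) (u τ (ψ τ y)) := (dist_eq_norm _ _).symm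
      _ ≤ L τ * (‖w τ‖ * (1 + |Real.log ‖w τ‖|)) := h2
  -- no collision on [0, t]
  have hne : ∀ τ ∈ Set.Icc (0:ℝ) t, w τ ≠ 0 := by
    by_contra hcon
    push_neg at hcon
    obtain ⟨τ₀, hτ₀mem, hτ₀⟩ := hcon
    set Z : Set ℝ := Set.Icc 0 t ∩ w ⁻¹' {0} with hZ
    have hZne : Z.Nonempty := ⟨τ₀, hτ₀mem, by simpa using hτ₀⟩
    have hZbdd : BddBelow Z := ⟨0, fun z hz => hz.1.1⟩
    have hZclosed : IsClosed Z := isClosed_Icc.inter (isClosed_singleton.preimage hwc)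
    set t₁ := sInf Z with ht₁def
    have ht₁Z : t₁ ∈ Z := hZclosed.csInf_mem hZne hZbdd
    have hwt₁ : w t₁ = 0 := by simpa using ht₁Z.2
    have ht₁le : t₁ ≤ t := ht₁Z.1.2
    have ht₁pos : 0 < t₁ := by
      rcases ht₁Z.1.1.lt_or_eq with h | h
      · exact h
      · exfalso
        apply hxy
        have h0 : w 0 = 0 := by rw [h]; exact hwt₁
        rw [hw00] at h0
        exact sub_eq_zero.1 h0
    have hbefore : ∀ τ ∈ Set.Ico (0:ℝ) t₁, w τ ≠ 0 := by
      intro τ hτ h0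
      exact absurd (csInf_le hZbdd ⟨⟨hτ.1, hτ.2.le.trans ht₁le⟩, by simpa using h0⟩)
        (not_le.2 hτ.2)
    set C : ℝ := Hfun (Real.log ‖w 0‖) - ∫ τ in (0:ℝ)..t₁, L τ with hC
    set δ : ℝ := Real.exp (min 0 (1 - Real.exp (-C)) - 1) with hδ
    have hδpos : 0 < δ := Real.exp_pos _
    have hLint₁ : IntervalIntegrable L volume 0 t₁ := hll_int t₁ ht₁pos
    have htend : Filter.Tendsto (fun τ => ‖w τ‖) (nhds t₁) (nhds 0) := by
      have h := (hwc.norm.continuousAt (x := t₁))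
      rwa [ContinuousAt, hwt₁, norm_zero] at h
    have hev : ∀ᶠ τ in nhds t₁, ‖w τ‖ < δ := htend (Iio_mem_nhds hδpos)
    have hnb : (nhdsWithin t₁ (Set.Ico 0 t₁)).NeBot := by
      rw [← mem_closure_iff_nhdsWithin_neBot, closure_Ico ht₁pos.ne]
      exact ⟨ht₁pos.le, le_rfl⟩
    have hev2 : ∀ᶠ τ in nhdsWithin t₁ (Set.Ico 0 t₁), ‖w τ‖ < δ :=
      hev.filter_mono nhdsWithin_le_nhds
    have hev3 : ∀ᶠ τ in nhdsWithin t₁ (Set.Ico 0 t₁), τ ∈ Set.Ico 0 t₁ :=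
      eventually_mem_nhdsWithin
    haveI := hnb
    obtain ⟨s, hsδ, hsIco⟩ := (hev2.and hev3).exists
    have hwsne : w s ≠ 0 := hbefore s hsIco
    have hrpos : 0 < ‖w s‖ := norm_pos_iff.2 hwsne
    have hsmem : s ∈ Set.uIcc (0:ℝ) t₁ := by
      rw [Set.uIcc_of_le ht₁pos.le]
      exact ⟨hsIco.1, hsIco.2.le⟩
    have hkey := key_gronwall L w w' hw' hw'c s hsIco.1
      (fun τ hτ => hbefore τ ⟨hτ.1, lt_of_le_of_lt hτ.2 hsIco.2⟩)
      (fun τ hτ => hLbound τ (hbefore τ ⟨hτ.1, lt_of_le_of_lt hτ.2 hsIco.2⟩))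
      (hLint₁.mono_set (Set.uIcc_subset_uIcc Set.left_mem_uIcc hsmem))
    have hmono : (∫ τ in (0:ℝ)..s, L τ) ≤ ∫ τ in (0:ℝ)..t₁, L τ :=
      intervalIntegral.integral_mono_interval le_rfl hsIco.1 hsIco.2.le
        (Filter.Eventually.of_forall fun τ => hLnn τ) hLint₁
    have hlow : C ≤ Hfun (Real.log ‖w s‖) := by
      have h := abs_le.1 hkey
      have h1 := h.1
      rw [hC]
      linarith
    have hupper : Hfun (Real.log ‖w s‖) < C := by
      have hlogs : Real.log ‖w s‖ < min 0 (1 - Real.exp (-C)) - 1 := by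
        calc Real.log ‖w s‖ < Real.log δ := Real.log_lt_log hrpos hsδ
          _ = min 0 (1 - Real.exp (-C)) - 1 := Real.log_exp _
      have hm1 := min_le_left (0:ℝ) (1 - Real.exp (-C))
      have hm2 := min_le_right (0:ℝ) (1 - Real.exp (-C))
      have h1 : Real.log ‖w s‖ < 0 := by linarith
      have h2 : Real.log ‖w s‖ < 1 - Real.exp (-C) := by linarith
      rw [Hfun, if_neg (not_le.2 h1)]
      have h3 : Real.exp (-C) < 1 - Real.log ‖w s‖ := by linarith
      have h4 : -C < Real.log (1 - Real.log ‖w s‖) :=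
        (Real.lt_log_iff_exp_lt (by linarith [Real.exp_pos (-C)])).2 h3
      linarith
    linarith
  have hLt : IntervalIntegrable L volume 0 t := by
    rcases ht.lt_or_eq with h | h
    · exact hll_int t h
    · exact h ▸ intervalIntegrable_refl L 0
  have hkey := key_gronwall L w w' hw' hw'c t ht hne
    (fun τ hτ => hLbound τ (hne τ hτ)) hLt
  have hrpos : 0 < dist (ψ t x) (ψ t y) := by
    rw [dist_eq_norm]
    exact norm_pos_iff.2 (hne t ⟨ht, le_rfl⟩)
  have hspos : 0 < dist x y := dist_pos.2 hxy
  refine le_trans (Phi_le_exp hrpos hspos) (Real.exp_le_exp.2 ?_)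
  have e1 : dist (ψ t x) (ψ t y) = ‖w t‖ := dist_eq_norm _ _
  have e2 : dist x y = ‖w 0‖ := by rw [hw00]; exact dist_eq_norm _ _
  rw [e1, e2]
  exact hkey
end
end

section
/- Define g : (0,∞) → ℝ by g(τ) = ln(1 + ln τ) if τ ≥ 1 and g(τ) = −ln(1 − ln τ) if 0 < τ < 1. Let T > 0, let L : [0,T] → [0,∞) be continuous, and let z : [0,T] → (0,∞) be differentiable with |z'(t)| ≤ L(t)(1 + |ln z(t)|) z(t) for all t ∈ [0,T]. Then for every t ∈ [0,T], |g(z(t)) − g(z(0))| ≤ ∫₀ᵗ L(τ) dτ, and consequently Φ(z(t), z(0)) ≤ exp(∫₀ᵗ L(τ) dτ). -/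
/-!
`g` is `C¹` on `(0, ∞)` with `g'(τ) = 1 / ((1 + |ln τ|) τ)`: the two branches are glued at `τ = 1`,
where both vanish and both have slope `1`. The differential inequality therefore says exactly
`|(g ∘ z)'| ≤ L`, and the first estimate is "displacement ≤ integral of the speed".
For the second, `g(τ) = ± ln (1 + |ln τ|)` with the sign of `ln τ`, so `g(r) - g(s)` is a difference
of these logarithms when `r, s` lie on the same side of `1` and their sum otherwise; in both cases
`Φ(r, s) = exp |g(r) - g(s)|`.
-/

open MeasureTheory Metric Real
open scoped ENNReal

noncomputable section

/-- The function `g` : `g(τ) = ln(1+ln τ)` for `τ ≥ 1`, `g(τ) = -ln(1-ln τ)` for `0 < τ < 1`. -/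
def gfun (τ : ℝ) : ℝ :=
  if 1 ≤ τ then Real.log (1 + Real.log τ) else -Real.log (1 - Real.log τ)

open Set

theorem hasDerivAt_of_hasDerivWithinAt_Iic_Ici {F : Type*} [NormedAddCommGroup F]
    [NormedSpace ℝ F] {f : ℝ → F} {f' : F} {a x : ℝ}
    (hl : x ≤ a → HasDerivWithinAt f f' (Iic a) x)
    (hr : a ≤ x → HasDerivWithinAt f f' (Ici a) x) : HasDerivAt f f' x := by
  rcases lt_trichotomy x a with hxa | rfl | hax
  · exact (hl hxa.le).hasDerivAt (Iic_mem_nhds hxa)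
  · simpa [Iic_union_Ici] using (hl le_rfl).union (hr le_rfl)
  · exact (hr hax.le).hasDerivAt (Ici_mem_nhds hax)

theorem gfun_eqOn_Iic : EqOn gfun (fun τ => -log (1 - log τ)) (Iic 1) := by
  intro τ hτ
  rcases (mem_Iic.1 hτ).lt_or_eq with hτ | rfl
  · simp [gfun, not_le.2 hτ]
  · simp [gfun]

theorem gfun_eqOn_Ici : EqOn gfun (fun τ => log (1 + log τ)) (Ici 1) :=
  fun _ hτ => if_pos hτ

theorem gfun_of_le_one {τ : ℝ} (h0 : 0 < τ) (h1 : τ ≤ 1) : gfun τ = -log (1 + |log τ|) := by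
  rw [gfun_eqOn_Iic h1, abs_of_nonpos (log_nonpos h0.le h1), ← sub_eq_add_neg]

theorem gfun_of_one_le {τ : ℝ} (h1 : 1 ≤ τ) : gfun τ = log (1 + |log τ|) := by
  rw [gfun_eqOn_Ici h1, abs_of_nonneg (log_nonneg h1)]

theorem hasDerivAt_gfun {x : ℝ} (hx : 0 < x) : HasDerivAt gfun ((1 + |log x|) * x)⁻¹ x := by
  apply hasDerivAt_of_hasDerivWithinAt_Iic_Ici (a := 1)
  · intro hx1
    have hlog : log x ≤ 0 := log_nonpos hx.le hx1
    have h := (((hasDerivAt_log hx.ne').const_sub 1).log (by linarith)).neg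
    rw [abs_of_nonpos hlog]
    convert h.hasDerivWithinAt.congr gfun_eqOn_Iic (gfun_eqOn_Iic hx1) using 1
    field_simp
    ring
  · intro hx1
    have hlog : 0 ≤ log x := log_nonneg hx1
    have h := ((hasDerivAt_log hx.ne').const_add 1).log (by linarith)
    rw [abs_of_nonneg hlog]
    convert h.hasDerivWithinAt.congr gfun_eqOn_Ici (gfun_eqOn_Ici hx1) using 1
    field_simp

theorem Phi_eq_exp_abs_sub_gfun {r s : ℝ} (hr : 0 < r) (hs : 0 < s) :
    Phi r s = exp |gfun r - gfun s| := by
  have hA : 0 < 1 + |log r| := by positivity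
  have hB : 0 < 1 + |log s| := by positivity
  have hlogA : 0 ≤ log (1 + |log r|) := log_nonneg (by linarith [abs_nonneg (log r)])
  have hlogB : 0 ≤ log (1 + |log s|) := log_nonneg (by linarith [abs_nonneg (log s)])
  unfold Phi
  split_ifs with hside
  · have hdiff : |gfun r - gfun s| = |log (1 + |log r|) - log (1 + |log s|)| := by
      rcases mul_nonneg_iff.1 hside with ⟨hs1, hr1⟩ | ⟨hs1, hr1⟩
      · rw [gfun_of_le_one hr (by linarith), gfun_of_le_one hs (by linarith), ← abs_neg]
        ring_nf
      · rw [gfun_of_one_le (by linarith), gfun_of_one_le (by linarith)]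
    rw [hdiff, abs_eq_max_neg (a := _ - _), exp_monotone.map_max, neg_sub, exp_sub, exp_sub, exp_log hA,
      exp_log hB, max_comm]
  · have hsum : |gfun r - gfun s| = log (1 + |log s|) + log (1 + |log r|) := by
      rcases mul_neg_iff.1 (not_le.1 hside) with ⟨hs1, hr1⟩ | ⟨hs1, hr1⟩
      · rw [gfun_of_one_le (by linarith), gfun_of_le_one hs (by linarith), sub_neg_eq_add,
          abs_of_nonneg (by positivity), add_comm]
      · rw [gfun_of_le_one hr (by linarith), gfun_of_one_le (by linarith), ← neg_add',
          abs_neg, abs_of_nonneg (by positivity), add_comm]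
    rw [hsum, exp_add, exp_log hA, exp_log hB]

theorem ode_log_comparison_general (T : ℝ) (L : ℝ → ℝ)
    (hLc : ContinuousOn L (Set.Icc 0 T))
    (z z' : ℝ → ℝ) (hzpos : ∀ t ∈ Set.Icc (0:ℝ) T, 0 < z t)
    (hz : ∀ t ∈ Set.Icc (0:ℝ) T, HasDerivAt z (z' t) t)
    (hode : ∀ t ∈ Set.Icc (0:ℝ) T, |z' t| ≤ L t * (1 + |Real.log (z t)|) * z t) :
    ∀ t ∈ Set.Icc (0:ℝ) T,
      (|gfun (z t) - gfun (z 0)| ≤ ∫ τ in (0:ℝ)..t, L τ) ∧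
      Phi (z t) (z 0) ≤ Real.exp (∫ τ in (0:ℝ)..t, L τ) := by
  intro t ht
  have hderiv : ∀ s ∈ Icc 0 T, HasDerivAt (fun τ => gfun (z τ))
      (((1 + |log (z s)|) * z s)⁻¹ * z' s) s :=
    fun s hs => (hasDerivAt_gfun (hzpos s hs)).comp s (hz s hs)
  have hbound : ∀ s ∈ Icc 0 T, |((1 + |log (z s)|) * z s)⁻¹ * z' s| ≤ L s := by
    intro s hs
    have hpos : 0 < (1 + |log (z s)|) * z s := by have := hzpos s hs; positivity
    rw [abs_mul, abs_inv, abs_of_pos hpos, inv_mul_le_iff₀ hpos]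
    linarith [hode s hs]
  have hsub : Icc 0 t ⊆ Icc 0 T := Icc_subset_Icc_right ht.2
  have hg : |gfun (z t) - gfun (z 0)| ≤ ∫ τ in (0:ℝ)..t, L τ := by
    refine norm_sub_le_integral_of_norm_deriv_le_of_le ht.1
      (fun s hs => (hderiv s (hsub hs)).continuousAt.continuousWithinAt)
      (fun s hs => (hderiv s (hsub (Ioo_subset_Icc_self hs))).differentiableAt.differentiableWithinAt)
      (ae_of_all _ fun s hs => ?_) ((hLc.mono hsub).intervalIntegrable_of_Icc ht.1)
    rw [(hderiv s (hsub (Ioo_subset_Icc_self hs))).deriv]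
    exact hbound s (hsub (Ioo_subset_Icc_self hs))
  have hz0 : 0 < z 0 := hzpos 0 ⟨le_rfl, ht.1.trans ht.2⟩
  exact ⟨hg, (Phi_eq_exp_abs_sub_gfun (hzpos t ht) hz0).trans_le (exp_le_exp.2 hg)⟩

/-- ODE comparison estimate for `g` and the resulting bound on `Φ`. -/
theorem ode_log_comparison (T : ℝ) (hT : 0 < T) (L : ℝ → ℝ)
    (hLc : ContinuousOn L (Set.Icc 0 T)) (hLnn : ∀ t ∈ Set.Icc (0:ℝ) T, 0 ≤ L t)
    (z z' : ℝ → ℝ) (hzpos : ∀ t ∈ Set.Icc (0:ℝ) T, 0 < z t)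
    (hz : ∀ t ∈ Set.Icc (0:ℝ) T, HasDerivAt z (z' t) t)
    (hode : ∀ t ∈ Set.Icc (0:ℝ) T, |z' t| ≤ L t * (1 + |Real.log (z t)|) * z t) :
    ∀ t ∈ Set.Icc (0:ℝ) T,
      (|gfun (z t) - gfun (z 0)| ≤ ∫ τ in (0:ℝ)..t, L τ) ∧
      Phi (z t) (z 0) ≤ Real.exp (∫ τ in (0:ℝ)..t, L τ) :=
  ode_log_comparison_general T L hLc z z' hzpos hz hode
end
end

section
/- Let ψ be a homeomorphism of ℝ² with M := ‖ψ‖_* < ∞. Then for every pair of distinct points x, y ∈ ℝ²: (1) if |x−y| ≥ 1 and |ψ(x)−ψ(y)| ≥ 1 then e^{−1}|x−y|^{1/M} ≤ |ψ(x)−ψ(y)| ≤ e^{M}|x−y|^{M}; (2) if |x−y| ≤ 1 and |ψ(x)−ψ(y)| ≤ 1 then e^{−M}|x−y|^{M} ≤ |ψ(x)−ψ(y)| ≤ e|x−y|^{1/M}; (3) in all remaining cases, e^{−M}|x−y| ≤ |ψ(x)−ψ(y)| ≤ e^{M}|x−y|. -/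
/-!
In logarithmic coordinates `u = log |ψ x - ψ y|`, `v = log |x - y|`, the bound `Φ ≤ M` says that
`1 + |u|` and `1 + |v|` agree up to a factor `M` when `u` and `v` have the same sign, and that
`|u| + |v| ≤ M - 1` when they have opposite signs. Each estimate is one of these linear
inequalities between `u` and `v`, exponentiated.
-/

open MeasureTheory Metric Real
open scoped ENNReal

noncomputable section

/-- `‖ψ‖_* = sup_{x ≠ y} Φ(|ψ(x)-ψ(y)|, |x-y|)`, a supremum taken in `[0,∞]`. -/
def starNorm (ψ : E2 → E2) : ℝ≥0∞ :=
  ⨆ (x : E2) (y : E2) (_ : x ≠ y), ENNReal.ofReal (Phi (dist (ψ x) (ψ y)) (dist x y))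

lemma exp_mul_rpow_le_iff {r s : ℝ} (hr : 0 < r) (hs : 0 < s) (c p : ℝ) :
    exp c * s ^ p ≤ r ↔ c + p * log s ≤ log r := by
  rw [← log_le_log_iff (by positivity) hr, log_mul (exp_ne_zero _) (rpow_pos_of_pos hs p).ne', log_exp,
    log_rpow hs]

lemma le_exp_mul_rpow_iff {r s : ℝ} (hr : 0 < r) (hs : 0 < s) (c p : ℝ) :
    r ≤ exp c * s ^ p ↔ log r ≤ c + p * log s := by
  rw [← log_le_log_iff hr (by positivity), log_mul (exp_ne_zero _) (rpow_pos_of_pos hs p).ne', log_exp,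
    log_rpow hs]

section Phi

variable {r s M : ℝ}

lemma one_le_Phi (r s : ℝ) : 1 ≤ Phi r s := by
  have ha : (0 : ℝ) < 1 + |log r| := by positivity
  have hb : (0 : ℝ) < 1 + |log s| := by positivity
  unfold Phi
  split
  · rcases le_total (1 + |log r|) (1 + |log s|) with h | h
    · exact ((one_le_div ha).mpr h).trans (le_max_left _ _)
    · exact ((one_le_div hb).mpr h).trans (le_max_right _ _)
  · nlinarith [abs_nonneg (log r), abs_nonneg (log s)]

lemma one_add_abs_log_le_of_Phi_le (hrs : 0 ≤ (1 - s) * (1 - r)) (h : Phi r s ≤ M) :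
    1 + |log r| ≤ M * (1 + |log s|) ∧ 1 + |log s| ≤ M * (1 + |log r|) := by
  rw [Phi, if_pos hrs, max_le_iff, div_le_iff₀ (by positivity), div_le_iff₀ (by positivity)] at h
  exact h.symm

lemma abs_log_add_abs_log_le_of_Phi_le (hrs : (1 - s) * (1 - r) < 0) (h : Phi r s ≤ M) :
    |log r| + |log s| ≤ M - 1 := by
  rw [Phi, if_neg hrs.not_ge] at h
  nlinarith [abs_nonneg (log r), abs_nonneg (log s)]

theorem holder_bounds_of_Phi_le_of_one_le (hs : 1 ≤ s) (hr : 1 ≤ r) (h : Phi r s ≤ M) :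
    exp (-1) * s ^ (1 / M) ≤ r ∧ r ≤ exp M * s ^ M := by
  have hM : 0 < M := one_pos.trans_le ((one_le_Phi r s).trans h)
  have hrs : 0 ≤ (1 - s) * (1 - r) := mul_nonneg_of_nonpos_of_nonpos (by linarith) (by linarith)
  obtain ⟨hrM, hsM⟩ := one_add_abs_log_le_of_Phi_le hrs h
  rw [abs_of_nonneg (log_nonneg hr), abs_of_nonneg (log_nonneg hs)] at hrM hsM
  rw [exp_mul_rpow_le_iff (by positivity) (by positivity),
    le_exp_mul_rpow_iff (by positivity) (by positivity)]
  refine ⟨?_, by nlinarith [log_nonneg hs]⟩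
  have : 1 / M * log s ≤ 1 + log r := by
    rw [one_div, inv_mul_le_iff₀ hM]
    linarith
  linarith

theorem holder_bounds_of_Phi_le_of_le_one (hs₀ : 0 < s) (hr₀ : 0 < r) (hs : s ≤ 1) (hr : r ≤ 1)
    (h : Phi r s ≤ M) :
    exp (-M) * s ^ M ≤ r ∧ r ≤ exp 1 * s ^ (1 / M) := by
  have hM : 0 < M := one_pos.trans_le ((one_le_Phi r s).trans h)
  have hrs : 0 ≤ (1 - s) * (1 - r) := mul_nonneg (by linarith) (by linarith)
  obtain ⟨hrM, hsM⟩ := one_add_abs_log_le_of_Phi_le hrs h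
  rw [abs_of_nonpos (log_nonpos hr₀.le hr), abs_of_nonpos (log_nonpos hs₀.le hs)] at hrM hsM
  rw [exp_mul_rpow_le_iff hr₀ hs₀, le_exp_mul_rpow_iff hr₀ hs₀]
  refine ⟨by nlinarith [log_nonpos hs₀.le hs], ?_⟩
  have : log r - 1 ≤ 1 / M * log s := by
    rw [one_div, le_inv_mul_iff₀ hM]
    linarith
  linarith

theorem lipschitz_bounds_of_Phi_le (hs₀ : 0 < s) (hr₀ : 0 < r) (hrs : (1 - s) * (1 - r) < 0)
    (h : Phi r s ≤ M) :
    exp (-M) * s ≤ r ∧ r ≤ exp M * s := by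
  have hlog := abs_log_add_abs_log_le_of_Phi_le hrs h
  have hdiff : |log r - log s| ≤ M := by linarith [abs_sub (log r) (log s)]
  rw [← rpow_one s, exp_mul_rpow_le_iff hr₀ hs₀, le_exp_mul_rpow_iff hr₀ hs₀]
  constructor <;> linarith [abs_le.mp hdiff]

end Phi

lemma Phi_le_toReal_starNorm (ψ : E2 → E2) (hfin : starNorm ψ ≠ ⊤) {x y : E2} (hxy : x ≠ y) :
    Phi (dist (ψ x) (ψ y)) (dist x y) ≤ (starNorm ψ).toReal := by
  rw [← ENNReal.ofReal_le_iff_le_toReal hfin]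
  exact le_iSup_of_le x (le_iSup_of_le y (le_iSup_of_le hxy le_rfl))

/-- bi-Hölder estimates for a homeomorphism with finite `‖ψ‖_*`. -/
theorem star_norm_holder (ψ : E2 ≃ₜ E2) (hfin : starNorm ψ ≠ ⊤)
    (x y : E2) (hxy : x ≠ y) :
    (1 ≤ dist x y → 1 ≤ dist (ψ x) (ψ y) →
      Real.exp (-1) * dist x y ^ (1 / (starNorm ψ).toReal) ≤ dist (ψ x) (ψ y) ∧
      dist (ψ x) (ψ y) ≤ Real.exp (starNorm ψ).toReal * dist x y ^ (starNorm ψ).toReal) ∧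
    (dist x y ≤ 1 → dist (ψ x) (ψ y) ≤ 1 →
      Real.exp (-(starNorm ψ).toReal) * dist x y ^ (starNorm ψ).toReal ≤ dist (ψ x) (ψ y) ∧
      dist (ψ x) (ψ y) ≤ Real.exp 1 * dist x y ^ (1 / (starNorm ψ).toReal)) ∧
    (¬ (1 ≤ dist x y ∧ 1 ≤ dist (ψ x) (ψ y)) → ¬ (dist x y ≤ 1 ∧ dist (ψ x) (ψ y) ≤ 1) →
      Real.exp (-(starNorm ψ).toReal) * dist x y ≤ dist (ψ x) (ψ y) ∧
      dist (ψ x) (ψ y) ≤ Real.exp (starNorm ψ).toReal * dist x y) := by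
  have hPhi := Phi_le_toReal_starNorm ψ hfin hxy
  have hs : 0 < dist x y := dist_pos.mpr hxy
  have hr : 0 < dist (ψ x) (ψ y) := dist_pos.mpr (ψ.injective.ne hxy)
  refine ⟨fun hs₁ hr₁ => holder_bounds_of_Phi_le_of_one_le hs₁ hr₁ hPhi,
    fun hs₁ hr₁ => holder_bounds_of_Phi_le_of_le_one hs hr hs₁ hr₁ hPhi,
    fun hlarge hsmall => lipschitz_bounds_of_Phi_le hs hr ?_ hPhi⟩
  by_contra! hrs
  rcases mul_nonneg_iff.mp hrs with ⟨hs₁, hr₁⟩ | ⟨hs₁, hr₁⟩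
  · exact hsmall ⟨by linarith, by linarith⟩
  · exact hlarge ⟨by linarith, by linarith⟩
end
end

section
/- There exists a universal constant C > 0 such that for every M ≥ 1 and every r > 0, defining g_M(r) := 4e^M r^M if r ≥ 1 and g_M(r) := 4·max{e r^{1/M}, e^M r} if 0 < r < 1, one has |ln((1 + |ln g_M(r)|)/(1 + |ln r|))| ≤ C(1 + ln(1 + M)). -/
open Real

noncomputable section

/-- `g_M(r) := 4e^M r^M` if `r ≥ 1`, `4 max{e r^{1/M}, e^M r}` if `0 < r < 1`. -/
def gFun (M r : ℝ) : ℝ :=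
  if 1 ≤ r then 4 * Real.exp M * r ^ M
  else 4 * max (Real.exp 1 * r ^ (1 / M)) (Real.exp M * r)

/-! With `L = |ln r|`, the quantities `1 + |ln g_M(r)|` and `1 + L` agree up to a factor
`(1 + M)²`, so the logarithm of their ratio is at most `2 ln (1 + M)`. For `r ≥ 1`,
`ln g_M(r) = ln 4 + M + M L`. For `r < 1`, `ln g_M(r) = ln 4 + max (1 - L/M) (M - L)` lies
between `-L` and `ln 4 + M`, and is at most `ln 4 + M - L/M`, which forces it to be large in
absolute value when `L` is large compared to `M²`. -/

theorem abs_log_div_le_log_of_le_mul {a b K : ℝ} (ha : 0 < a) (hb : 0 < b)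
    (hab : a ≤ K * b) (hba : b ≤ K * a) : |log (a / b)| ≤ log K := by
  have hK : 0 < K := pos_of_mul_pos_left (ha.trans_le hab) hb.le
  have h₁ := log_le_log ha hab
  have h₂ := log_le_log hb hba
  rw [log_mul hK.ne' hb.ne'] at h₁
  rw [log_mul hK.ne' ha.ne'] at h₂
  rw [log_div ha.ne' hb.ne', abs_le]
  constructor <;> linarith

theorem log_four_lt_two : log 4 < 2 := by
  rw [log_lt_iff_lt_exp (by norm_num)]
  linarith [quadratic_le_exp_of_nonneg (x := 2) (by norm_num)]

theorem log_gFun_of_one_le {M r : ℝ} (hr : 1 ≤ r) :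
    log (gFun M r) = log 4 + M + M * log r := by
  have hr₀ : 0 < r := one_pos.trans_le hr
  rw [gFun, if_pos hr, log_mul (by positivity) (rpow_pos_of_pos hr₀ M).ne',
    log_mul (by norm_num) (exp_ne_zero M), log_exp, log_rpow hr₀]

theorem log_gFun_of_lt_one {M r : ℝ} (hr₀ : 0 < r) (hr₁ : r < 1) :
    log (gFun M r) = log 4 + max (1 + log r / M) (M + log r) := by
  have h₁ : 0 < exp 1 * r ^ (1 / M) := by positivity
  have h₂ : 0 < exp M * r := by positivity
  rw [gFun, if_neg hr₁.not_ge, log_mul (by norm_num) (h₁.trans_le (le_max_left _ _)).ne',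
    strictMonoOn_log.monotoneOn.map_max h₁ h₂, log_mul (exp_ne_zero 1) (by positivity),
    log_mul (exp_ne_zero M) hr₀.ne', log_exp, log_exp, log_rpow hr₀, one_div_mul_eq_div]

theorem abs_log_gFun_le {M r : ℝ} (hM : 1 ≤ M) (hr : 0 < r) :
    |log (gFun M r)| ≤ 2 + M + M * |log r| := by
  have h4 := log_four_lt_two
  have h4' : 0 < log 4 := log_pos (by norm_num)
  rcases le_or_gt 1 r with hr₁ | hr₁
  · have hL : 0 ≤ log r := log_nonneg hr₁
    rw [log_gFun_of_one_le hr₁, abs_of_nonneg hL, abs_of_nonneg (by positivity)]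
    linarith
  · have ht : log r < 0 := log_neg hr hr₁
    have htM : log r ≤ log r / M := (le_div_iff₀ (by linarith)).2 (by nlinarith)
    have htM' : log r / M ≤ 0 := div_nonpos_of_nonpos_of_nonneg ht.le (by linarith)
    rw [log_gFun_of_lt_one hr hr₁, abs_of_neg ht, abs_le]
    constructor
    · nlinarith [le_max_left (1 + log r / M) (M + log r)]
    · linarith [max_le (show 1 + log r / M ≤ M by linarith) (show M + log r ≤ M by linarith),
        mul_nonneg (by linarith : 0 ≤ M) (neg_nonneg.2 ht.le)]

theorem abs_log_le_of_gFun {M r : ℝ} (hM : 1 ≤ M) (hr : 0 < r) :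
    |log r| ≤ M * (|log (gFun M r)| + M + 2) := by
  have h4 := log_four_lt_two
  have h4' : 0 < log 4 := log_pos (by norm_num)
  rcases le_or_gt 1 r with hr₁ | hr₁
  · have hL : 0 ≤ log r := log_nonneg hr₁
    rw [log_gFun_of_one_le hr₁, abs_of_nonneg hL, abs_of_nonneg (by positivity)]
    nlinarith [mul_le_mul_of_nonneg_right (one_le_mul_of_one_le_of_one_le hM hM) hL,
      mul_nonneg (by linarith : 0 ≤ M) (by linarith : 0 ≤ log 4 + 2 * M + 2)]
  · have ht : log r < 0 := log_neg hr hr₁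
    have htM : log r ≤ log r / M := (le_div_iff₀ (by linarith)).2 (by nlinarith)
    have hmax : max (1 + log r / M) (M + log r) ≤ M + log r / M :=
      max_le (by linarith) (by linarith)
    have hv := neg_le_abs (log (gFun M r))
    have hlog := log_gFun_of_lt_one (M := M) hr hr₁
    rw [abs_of_neg ht, ← div_le_iff₀' (by linarith), neg_div]
    linarith

/-- the logarithmic distortion of `g_M` is `O(1 + ln(1+M))`. -/
theorem log_distortion_of_gFun :
    ∃ C > (0:ℝ), ∀ M ≥ (1:ℝ), ∀ r > (0:ℝ),
      |Real.log ((1 + |Real.log (gFun M r)|) / (1 + |Real.log r|))| ≤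
        C * (1 + Real.log (1 + M)) := by
  refine ⟨2, two_pos, fun M hM r hr => ?_⟩
  have hg := abs_log_gFun_le hM hr
  have hr' := abs_log_le_of_gFun hM hr
  have hL := mul_nonneg (abs_nonneg (log r)) (by positivity : (0:ℝ) ≤ M ^ 2 + M + 1)
  have hG := mul_nonneg (abs_nonneg (log (gFun M r))) (by positivity : (0:ℝ) ≤ M ^ 2 + M + 1)
  calc _ ≤ log ((1 + M) ^ 2) :=
        abs_log_div_le_log_of_le_mul (by positivity) (by positivity) (by nlinarith) (by nlinarith)
    _ = 2 * log (1 + M) := by rw [log_pow]; norm_num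
    _ ≤ 2 * (1 + log (1 + M)) := by linarith
end
end

section
/- Define f : ℝ² → ℝ by f(x) = ln(1 − ln|x|) for 0 < |x| ≤ 1 and f(x) = 0 for |x| > 1 (and, say, f(0) = 0). Then f is not essentially bounded on ℝ², yet ‖f‖_LBMO < ∞. In particular the inclusion L^∞(ℝ²) ⊂ LBMO is strict. -/
/-
Write `fLog x = fLogProfile ‖x‖` with `fLogProfile t = log (1 + log⁺ t⁻¹)`: the profile is
antitone and `1`-Lipschitz in `log t`. On a ball `B(c, r)` with `2r ≤ ‖c‖` it therefore varies by
at most `log 2`. If `‖c‖ < 2r`, then `B(c, r) ⊆ B(0, 3r)`, and there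
`|fLog x - fLogProfile (3r)| ≤ log⁺ (3r / ‖x‖)`, whose mean over `B(0, 3r)` is at most `1` by the
layer cake formula. So every ball average of `fLog` lies within a dimensional constant of
`fLogProfile (max ‖c‖ r)`, which bounds the BMO seminorm. For balls with `2B₂ ⊆ B₁` these
comparison values differ by at most `log 2 + fLogProfile r₂ - fLogProfile r₁`, and that last
difference is exactly the logarithm in the denominator of the LBMO norm. Finally, `fLog` tends to
`∞` at `0`, and punctured neighbourhoods of `0` have positive measure.
-/

open MeasureTheory Metric Real
open scoped ENNReal

noncomputable section

/-- Average of `f` over the ball `B(c,r)`. -/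
def avg (f : E2 → ℝ) (c : E2) (r : ℝ) : ℝ := ⨍ x in ball c r, f x

/-- The BMO seminorm, as a supremum in `[0,∞]`. -/
def bmoNorm (f : E2 → ℝ) : ℝ≥0∞ :=
  ⨆ (c : E2) (r : ℝ) (_ : 0 < r), ENNReal.ofReal (⨍ x in ball c r, |f x - avg f c r|)

/-- The second part of the LBMO norm: supremum over pairs of balls `B₁ = B(x₁,r₁)`,
`B₂ = B(x₂,r₂)` with `0 < r₁ ≤ 1` and `2B₂ ⊆ B₁`. -/
def lbmoSup (f : E2 → ℝ) : ℝ≥0∞ :=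
  ⨆ (x₁ : E2) (x₂ : E2) (r₁ : ℝ) (r₂ : ℝ) (_ : 0 < r₂) (_ : 0 < r₁) (_ : r₁ ≤ 1)
    (_ : ball x₂ (2 * r₂) ⊆ ball x₁ r₁),
    ENNReal.ofReal (|avg f x₂ r₂ - avg f x₁ r₁| /
      (1 + Real.log ((1 - Real.log r₂) / (1 - Real.log r₁))))

/-- The LBMO norm. -/
def lbmoNorm (f : E2 → ℝ) : ℝ≥0∞ := bmoNorm f + lbmoSup f

-- The unbounded function `f(x) = ln(1 - ln |x|)` for `0 < |x| ≤ 1`, `f(x) = 0` otherwise.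
open Classical in
def fLog : E2 → ℝ :=
  fun x => if ‖x‖ ≤ 1 ∧ x ≠ 0 then Real.log (1 - Real.log ‖x‖) else 0

open Filter Topology Module

def fLogProfile (t : ℝ) : ℝ := log (1 + log⁺ t⁻¹)

theorem fLogProfile_of_le_one {t : ℝ} (ht : 0 < t) (ht₁ : t ≤ 1) :
    fLogProfile t = log (1 - log t) := by
  have h : 1 ≤ |t⁻¹| := by rw [abs_inv, abs_of_pos ht]; exact (one_le_inv₀ ht).2 ht₁
  rw [fLogProfile, posLog_eq_log h, log_inv, sub_eq_add_neg]

theorem fLogProfile_eq_zero_of_one_le {t : ℝ} (ht : 1 ≤ t) : fLogProfile t = 0 := by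
  have h : |t⁻¹| ≤ 1 := by
    rw [abs_inv, abs_of_pos (zero_lt_one.trans_le ht)]; exact inv_le_one_of_one_le₀ ht
  rw [fLogProfile, (posLog_eq_zero_iff _).2 h, add_zero, log_one]

theorem fLog_eq_fLogProfile_norm : fLog = fun x => fLogProfile ‖x‖ := by
  ext x
  rcases eq_or_ne x 0 with rfl | hx
  · simp [fLog, fLogProfile]
  rcases le_or_gt ‖x‖ 1 with h₁ | h₁
  · simp [fLog, h₁, hx, fLogProfile_of_le_one (norm_pos_iff.2 hx) h₁]
  · simp [fLog, h₁.not_ge, fLogProfile_eq_zero_of_one_le h₁.le]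

theorem measurable_fLogProfile : Measurable fLogProfile := by
  unfold fLogProfile
  fun_prop

theorem fLogProfile_nonneg (t : ℝ) : 0 ≤ fLogProfile t :=
  log_nonneg <| le_add_of_nonneg_right posLog_nonneg

theorem log_one_add_add_le {b c : ℝ} (hb : 0 ≤ b) (hc : 0 ≤ c) :
    log (1 + b + c) ≤ log (1 + b) + c := by
  have h : 0 < 1 + b := by linarith
  calc log (1 + b + c) ≤ log ((1 + b) * exp c) :=
        log_le_log (by linarith) (by nlinarith [add_one_le_exp c])
    _ = log (1 + b) + c := by rw [log_mul h.ne' (exp_pos c).ne', log_exp]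

theorem fLogProfile_le_add_posLog_div (s : ℝ) {t : ℝ} (ht : t ≠ 0) :
    fLogProfile s ≤ fLogProfile t + log⁺ (t / s) := by
  have hsplit : log⁺ s⁻¹ ≤ log⁺ t⁻¹ + log⁺ (t / s) := by
    calc log⁺ s⁻¹ = log⁺ (t⁻¹ * (t / s)) := by rw [← mul_div_assoc, inv_mul_cancel₀ ht, one_div]
      _ ≤ _ := posLog_mul
  calc fLogProfile s ≤ log (1 + log⁺ t⁻¹ + log⁺ (t / s)) :=
        log_le_log (by linarith [posLog_nonneg (x := s⁻¹)]) (by linarith)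
    _ ≤ fLogProfile t + log⁺ (t / s) := log_one_add_add_le posLog_nonneg posLog_nonneg

theorem fLogProfile_anti {s t : ℝ} (hs : 0 < s) (hst : s ≤ t) :
    fLogProfile t ≤ fLogProfile s := by
  have ht := hs.trans_le hst
  have h : |s / t| ≤ 1 := by
    rw [abs_div, abs_of_pos hs, abs_of_pos ht]; exact div_le_one_of_le₀ hst ht.le
  simpa [(posLog_eq_zero_iff _).2 h] using fLogProfile_le_add_posLog_div t hs.ne'

theorem fLogProfile_le_add_posLog {s t k : ℝ} (hs : 0 < s) (ht : 0 < t) (h : t ≤ k * s) :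
    fLogProfile s ≤ fLogProfile t + log⁺ k := by
  have := posLog_le_posLog (div_pos ht hs).le ((div_le_iff₀ hs).2 h)
  linarith [fLogProfile_le_add_posLog_div s ht.ne']

theorem fLogProfile_sub_fLogProfile {r₁ r₂ : ℝ} (hr₂ : 0 < r₂) (h : r₂ ≤ r₁) (hr₁ : r₁ ≤ 1) :
    fLogProfile r₂ - fLogProfile r₁ = log ((1 - log r₂) / (1 - log r₁)) := by
  have hr₁' : 0 < r₁ := hr₂.trans_le h
  rw [fLogProfile_of_le_one hr₂ (h.trans hr₁), fLogProfile_of_le_one hr₁' hr₁,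
    log_div (by linarith [log_nonpos hr₂.le (h.trans hr₁)]) (by linarith [log_nonpos hr₁'.le hr₁])]

theorem tendsto_fLogProfile_nhdsGT_zero : Tendsto fLogProfile (𝓝[>] 0) atTop :=
  tendsto_log_atTop.comp <| tendsto_atTop_add_const_left _ 1 <|
    (tendsto_atTop_mono (fun _ => le_max_right _ _) tendsto_log_atTop).comp tendsto_inv_nhdsGT_zero

theorem posLog_three_le_three_pow {n : ℕ} (hn : n ≠ 0) : log⁺ 3 ≤ (3 : ℝ) ^ n :=
  (max_le (by norm_num) (log_le_self (by norm_num))).trans (le_self_pow₀ (by norm_num) hn)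

theorem lintegral_ofReal_exp_neg_Ioi_zero :
    ∫⁻ t in Set.Ioi (0 : ℝ), ENNReal.ofReal (exp (-t)) = 1 := by
  rw [← ofReal_integral_eq_lintegral_ofReal, integral_exp_neg_Ioi_zero, ENNReal.ofReal_one]
  · exact (by simpa using exp_neg_integrableOn_Ioi 0 one_pos :
      IntegrableOn (fun t : ℝ => exp (-t)) (Set.Ioi 0))
  · exact ae_of_all _ fun t => (exp_pos _).le

section Average

variable {α : Type*} [MeasurableSpace α] {μ : Measure α} {s : Set α} {f : α → ℝ}

theorem abs_setAverage_sub_le (hs₀ : μ s ≠ 0) (hs : μ s ≠ ∞) (hf : IntegrableOn f s μ) (a : ℝ) :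
    |⨍ x in s, f x ∂μ - a| ≤ ⨍ x in s, |f x - a| ∂μ := by
  have := NeZero.mk (show μ.restrict s ≠ 0 by simpa using hs₀)
  have := Fact.mk hs.lt_top
  simp only [average_eq']
  set ν := (μ.restrict s Set.univ)⁻¹ • μ.restrict s
  have hfν : Integrable f ν := hf.smul_measure (by simp [hs₀])
  calc |∫ x, f x ∂ν - a| = |∫ x, (f x - a) ∂ν| := by
        rw [integral_sub hfν (integrable_const a), integral_const, probReal_univ, one_smul]
    _ ≤ ∫ x, |f x - a| ∂ν := abs_integral_le_integral_abs

theorem setAverage_abs_sub_setAverage_le (hs₀ : μ s ≠ 0) (hs : μ s ≠ ∞)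
    (hf : IntegrableOn f s μ) (a : ℝ) :
    ⨍ x in s, |f x - ⨍ y in s, f y ∂μ| ∂μ ≤ 2 * ⨍ x in s, |f x - a| ∂μ := by
  have hmean := abs_setAverage_sub_le hs₀ hs hf a
  have := NeZero.mk (show μ.restrict s ≠ 0 by simpa using hs₀)
  have := Fact.mk hs.lt_top
  simp only [average_eq'] at hmean ⊢
  set ν := (μ.restrict s Set.univ)⁻¹ • μ.restrict s
  set m := ∫ x, f x ∂ν
  have hfν : Integrable (fun x => |f x - a|) ν :=
    ((hf.smul_measure (by simp [hs₀])).sub (integrable_const a)).abs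
  calc ∫ x, |f x - m| ∂ν ≤ ∫ x, (|f x - a| + |m - a|) ∂ν := by
        refine integral_mono_of_nonneg (ae_of_all _ fun _ => abs_nonneg _)
          (hfν.add (integrable_const _)) (ae_of_all _ fun x => ?_)
        simpa only [abs_sub_comm m a] using abs_sub_le (f x) a m
    _ = ∫ x, |f x - a| ∂ν + |m - a| := by
        rw [integral_add hfν (integrable_const _), integral_const, probReal_univ, one_smul]
    _ ≤ 2 * ∫ x, |f x - a| ∂ν := by linarith

theorem setAverage_le_of_forall_le (hs₀ : μ s ≠ 0) (hs : μ s ≠ ∞) (hm : MeasurableSet s)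
    (hf : IntegrableOn f s μ) {C : ℝ} (h : ∀ x ∈ s, f x ≤ C) : ⨍ x in s, f x ∂μ ≤ C := by
  rw [← setAverage_const hs₀ hs C, setAverage_eq, setAverage_eq]
  exact smul_le_smul_of_nonneg_left (setIntegral_mono_on hf (integrableOn_const hs) hm h)
    (inv_nonneg.2 measureReal_nonneg)

end Average

theorem measurable_posLog_div_norm {E : Type*} [NormedAddCommGroup E] [MeasurableSpace E]
    [BorelSpace E] (R : ℝ) : Measurable fun x : E => log⁺ (R / ‖x‖) := by
  fun_prop

section NormedSpace

variable {E : Type*} [NormedAddCommGroup E]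

theorem abs_fLogProfile_norm_sub_le {x : E} {R : ℝ} (hx : x ∈ ball 0 R) (hx0 : x ≠ 0) :
    |fLogProfile ‖x‖ - fLogProfile R| ≤ log⁺ (R / ‖x‖) := by
  have hx' : 0 < ‖x‖ := norm_pos_iff.2 hx0
  have hxR : ‖x‖ < R := mem_ball_zero_iff.1 hx
  rw [abs_le]
  constructor
  · linarith [fLogProfile_anti hx' hxR.le, posLog_nonneg (x := R / ‖x‖)]
  · linarith [fLogProfile_le_add_posLog_div ‖x‖ (hx'.trans hxR).ne']

theorem abs_fLogProfile_norm_sub_le_of_mem_ball {c x : E} {r : ℝ} (hc : 2 * r ≤ ‖c‖)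
    (hx : x ∈ ball c r) : |fLogProfile ‖x‖ - fLogProfile ‖c‖| ≤ log⁺ 2 := by
  have hxc := mem_ball_iff_norm.1 hx
  have hr : 0 < r := (norm_nonneg _).trans_lt hxc
  have h₁ := norm_sub_norm_le x c
  have h₂ := norm_sub_norm_le c x
  rw [norm_sub_rev] at h₂
  rw [abs_le]
  constructor
  · linarith [fLogProfile_le_add_posLog (k := 2) (by linarith : 0 < ‖c‖) (by linarith : 0 < ‖x‖)
      (by linarith)]
  · linarith [fLogProfile_le_add_posLog (k := 2) (by linarith : 0 < ‖x‖) (by linarith : 0 < ‖c‖)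
      (by linarith)]

theorem abs_fLogProfile_max_sub_le {x₁ x₂ : E} {r₁ r₂ : ℝ} (hr₂ : 0 < r₂)
    (h : dist x₂ x₁ + 2 * r₂ ≤ r₁) :
    |fLogProfile (max ‖x₂‖ r₂) - fLogProfile (max ‖x₁‖ r₁)| ≤
      log⁺ 2 + (fLogProfile r₂ - fLogProfile r₁) := by
  have hd := dist_nonneg (x := x₂) (y := x₁)
  have hn := abs_norm_sub_norm_le x₂ x₁
  rw [← dist_eq_norm, abs_le] at hn
  have hr : fLogProfile r₁ ≤ fLogProfile r₂ := fLogProfile_anti hr₂ (by linarith)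
  set ρ₁ := max ‖x₁‖ r₁
  set ρ₂ := max ‖x₂‖ r₂
  obtain ⟨hx₁ρ, hr₁ρ⟩ : ‖x₁‖ ≤ ρ₁ ∧ r₁ ≤ ρ₁ := ⟨le_max_left _ _, le_max_right _ _⟩
  obtain ⟨hx₂ρ, hr₂ρ⟩ : ‖x₂‖ ≤ ρ₂ ∧ r₂ ≤ ρ₂ := ⟨le_max_left _ _, le_max_right _ _⟩
  have hρ₁₂ : fLogProfile ρ₁ ≤ fLogProfile ρ₂ + log⁺ 2 :=
    fLogProfile_le_add_posLog (by linarith) (by linarith) (max_le (by linarith) (by linarith))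
  have hρ₂₁ : fLogProfile ρ₂ ≤ fLogProfile ρ₁ + log⁺ 2 + (fLogProfile r₂ - fLogProfile r₁) := by
    rcases le_or_gt (2 * r₁) ‖x₁‖ with hx₁ | hx₁
    · have hρ : ρ₁ = ‖x₁‖ := max_eq_left (by linarith)
      linarith [fLogProfile_le_add_posLog (s := ρ₂) (t := ρ₁) (k := 2) (by linarith) (by linarith)
        (by linarith)]
    · linarith [fLogProfile_le_add_posLog (s := r₁) (t := ρ₁) (k := 2) (by linarith) (by linarith)
        (max_le hx₁.le (by linarith)), fLogProfile_anti hr₂ hr₂ρ]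
  rw [abs_le]
  constructor <;> linarith

theorem setOf_lt_posLog_div_norm_subset {R t : ℝ} (hR : 0 < R) (ht : 0 < t) :
    {x : E | t < log⁺ (R / ‖x‖)} ⊆ ball 0 (exp (-t) * R) := by
  intro x (hx : t < max 0 (log (R / ‖x‖)))
  have hlog : t < log (R / ‖x‖) := (lt_max_iff.1 hx).resolve_left ht.not_gt
  have hx0 : 0 < ‖x‖ := by
    refine (norm_nonneg x).lt_of_ne fun h => ?_
    rw [← h, div_zero, log_zero] at hlog
    linarith
  rw [lt_log_iff_exp_lt (by positivity), lt_div_iff₀ hx0] at hlog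
  rw [mem_ball_zero_iff, exp_neg, ← div_eq_inv_mul, lt_div_iff₀ (exp_pos t)]
  linarith

variable [NormedSpace ℝ E] [Nontrivial E]

theorem dist_add_le_of_ball_subset {x y : E} {R r : ℝ} (hR : 0 < R) (h : ball x R ⊆ ball y r) :
    dist x y + R ≤ r := by
  have hcl : closedBall x R ⊆ closedBall y r := by
    rw [← closure_ball x hR.ne']
    exact (closure_mono h).trans closure_ball_subset_closedBall
  rcases eq_or_ne x y with rfl | hxy
  · obtain ⟨z, hz⟩ := (NormedSpace.sphere_nonempty (x := x)).2 hR.le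
    have hzr := hcl (sphere_subset_closedBall hz)
    rw [mem_sphere] at hz
    rw [mem_closedBall, hz] at hzr
    simpa using hzr
  · have hd : 0 < dist y x := dist_pos.2 hxy.symm
    have hz := hcl (show AffineMap.lineMap y x (1 + R / dist y x) ∈ closedBall x R by
      rw [mem_closedBall, dist_lineMap_right, sub_add_cancel_left, norm_neg, Real.norm_eq_abs,
        abs_of_pos (by positivity), div_mul_cancel₀ _ hd.ne'])
    rw [mem_closedBall, dist_lineMap_left, Real.norm_eq_abs, abs_of_pos (by positivity), add_mul,
      one_mul, div_mul_cancel₀ _ hd.ne', dist_comm] at hz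
    exact hz

variable [FiniteDimensional ℝ E] [MeasurableSpace E] [BorelSpace E] (μ : Measure E)
  [μ.IsAddHaarMeasure]

theorem lintegral_posLog_div_norm_le {R : ℝ} (hR : 0 < R) :
    ∫⁻ x in ball 0 R, ENNReal.ofReal (log⁺ (R / ‖x‖)) ∂μ ≤ μ (ball 0 R) := by
  rw [lintegral_eq_lintegral_meas_lt _ (ae_of_all _ fun _ => posLog_nonneg)
    (measurable_posLog_div_norm R).aemeasurable]
  have hlevel : ∀ t ∈ Set.Ioi (0 : ℝ), μ.restrict (ball 0 R) {x | t < log⁺ (R / ‖x‖)} ≤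
      ENNReal.ofReal (exp (-t)) * μ (ball 0 R) := fun t (ht : 0 < t) =>
    calc μ.restrict (ball 0 R) {x | t < log⁺ (R / ‖x‖)}
        ≤ μ (ball 0 (exp (-t) * R)) := (Measure.restrict_apply_le _ _).trans
          (measure_mono (setOf_lt_posLog_div_norm_subset hR ht))
      _ = ENNReal.ofReal (exp (-t) ^ finrank ℝ E) * μ (ball 0 R) :=
        Measure.addHaar_ball_mul μ 0 (exp_pos _).le R
      _ ≤ ENNReal.ofReal (exp (-t)) * μ (ball 0 R) := by
        gcongr
        exact pow_le_of_le_one (exp_pos _).le (exp_le_one_iff.2 (by linarith)) finrank_pos.ne'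
  calc ∫⁻ t in Set.Ioi 0, μ.restrict (ball 0 R) {x | t < log⁺ (R / ‖x‖)}
      ≤ ∫⁻ t in Set.Ioi 0, ENNReal.ofReal (exp (-t)) * μ (ball 0 R) :=
        setLIntegral_mono' measurableSet_Ioi hlevel
    _ = μ (ball 0 R) := by
      rw [lintegral_mul_const' _ _ measure_ball_lt_top.ne, lintegral_ofReal_exp_neg_Ioi_zero,
        one_mul]

theorem integrableOn_posLog_div_norm {R : ℝ} (hR : 0 < R) :
    IntegrableOn (fun x : E => log⁺ (R / ‖x‖)) (ball 0 R) μ := by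
  refine ⟨(measurable_posLog_div_norm R).aestronglyMeasurable, ?_⟩
  rw [hasFiniteIntegral_iff_ofReal (ae_of_all _ fun _ => posLog_nonneg)]
  exact (lintegral_posLog_div_norm_le μ hR).trans_lt measure_ball_lt_top

theorem setIntegral_posLog_div_norm_le {R : ℝ} (hR : 0 < R) :
    ∫ x in ball 0 R, log⁺ (R / ‖x‖) ∂μ ≤ μ.real (ball 0 R) := by
  rw [integral_eq_lintegral_of_nonneg_ae (ae_of_all _ fun _ => posLog_nonneg)
    (measurable_posLog_div_norm R).aestronglyMeasurable]
  exact ENNReal.toReal_mono measure_ball_lt_top.ne (lintegral_posLog_div_norm_le μ hR)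

theorem integrableOn_fLogProfile_norm (c : E) (r : ℝ) :
    IntegrableOn (fun x => fLogProfile ‖x‖) (ball c r) μ := by
  set R := ‖c‖ + |r| + 1
  have hR : 0 < R := by positivity
  have hsub : ball c r ⊆ ball 0 R :=
    ball_subset_ball' (by rw [dist_zero_right]; linarith [le_abs_self r])
  refine IntegrableOn.mono_set (Integrable.mono' ((integrableOn_posLog_div_norm μ hR).add
    (integrableOn_const (C := fLogProfile R) measure_ball_lt_top.ne))
    (measurable_fLogProfile.comp measurable_norm).aestronglyMeasurable
    (ae_of_all _ fun x => ?_)) hsub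
  show ‖fLogProfile ‖x‖‖ ≤ log⁺ (R / ‖x‖) + fLogProfile R
  rw [Real.norm_eq_abs, abs_of_nonneg (fLogProfile_nonneg _), add_comm]
  exact fLogProfile_le_add_posLog_div _ hR.ne'

theorem setIntegral_abs_fLogProfile_norm_sub_le {R : ℝ} (hR : 0 < R) :
    ∫ x in ball 0 R, |fLogProfile ‖x‖ - fLogProfile R| ∂μ ≤ μ.real (ball 0 R) := by
  refine (integral_mono_ae ((integrableOn_fLogProfile_norm μ 0 R).sub
    (integrableOn_const measure_ball_lt_top.ne)).abs (integrableOn_posLog_div_norm μ hR) ?_).trans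
    (setIntegral_posLog_div_norm_le μ hR)
  filter_upwards [ae_restrict_mem measurableSet_ball, ae_restrict_of_ae (Measure.ae_ne μ 0)]
    with x hx hx0
  exact abs_fLogProfile_norm_sub_le hx hx0

theorem setAverage_abs_fLogProfile_norm_sub_le_of_lt (c : E) {r : ℝ} (hr : 0 < r)
    (hc : ‖c‖ < 2 * r) :
    ⨍ x in ball c r, |fLogProfile ‖x‖ - fLogProfile (3 * r)| ∂μ ≤ 3 ^ finrank ℝ E := by
  have hsub : ball c r ⊆ ball 0 (3 * r) := ball_subset_ball' (by rw [dist_zero_right]; linarith)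
  have hB : 0 < μ.real (ball c r) :=
    ENNReal.toReal_pos (measure_ball_pos μ c hr).ne' measure_ball_lt_top.ne
  rw [setAverage_eq, smul_eq_mul, inv_mul_le_iff₀ hB]
  calc ∫ x in ball c r, |fLogProfile ‖x‖ - fLogProfile (3 * r)| ∂μ
      ≤ ∫ x in ball 0 (3 * r), |fLogProfile ‖x‖ - fLogProfile (3 * r)| ∂μ :=
        setIntegral_mono_set ((integrableOn_fLogProfile_norm μ 0 (3 * r)).sub
          (integrableOn_const measure_ball_lt_top.ne)).abs
          (ae_of_all _ fun _ => abs_nonneg _) hsub.eventuallyLE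
    _ ≤ μ.real (ball 0 (3 * r)) := setIntegral_abs_fLogProfile_norm_sub_le μ (by linarith)
    _ = μ.real (ball c r) * 3 ^ finrank ℝ E := by
      rw [measureReal_def, measureReal_def, Measure.addHaar_ball_mul μ 0 (by norm_num) r,
        Measure.addHaar_ball_center μ c, ENNReal.toReal_mul, ENNReal.toReal_ofReal (by positivity),
        mul_comm]

theorem exists_setAverage_abs_fLogProfile_norm_sub_le (c : E) {r : ℝ} (hr : 0 < r) :
    ∃ a, |a - fLogProfile (max ‖c‖ r)| ≤ 3 ^ finrank ℝ E ∧
      ⨍ x in ball c r, |fLogProfile ‖x‖ - a| ∂μ ≤ 3 ^ finrank ℝ E := by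
  have h3 : log⁺ 3 ≤ (3 : ℝ) ^ finrank ℝ E := posLog_three_le_three_pow finrank_pos.ne'
  have h23 : log⁺ 2 ≤ log⁺ 3 := posLog_le_posLog (by norm_num) (by norm_num)
  rcases le_or_gt (2 * r) ‖c‖ with hc | hc
  · refine ⟨fLogProfile ‖c‖, by simp [max_eq_left (by linarith : r ≤ ‖c‖)], ?_⟩
    refine (setAverage_le_of_forall_le (measure_ball_pos μ c hr).ne' measure_ball_lt_top.ne
      measurableSet_ball ((integrableOn_fLogProfile_norm μ c r).sub
      (integrableOn_const measure_ball_lt_top.ne)).abs fun x hx => ?_).trans (h23.trans h3)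
    exact abs_fLogProfile_norm_sub_le_of_mem_ball hc hx
  · refine ⟨fLogProfile (3 * r), ?_, setAverage_abs_fLogProfile_norm_sub_le_of_lt μ c hr hc⟩
    have hρ : 0 < max ‖c‖ r := lt_max_of_lt_right hr
    have hρ3 : max ‖c‖ r ≤ 3 * r := max_le (by linarith) (by linarith)
    rw [abs_le]
    constructor
    · linarith [fLogProfile_le_add_posLog (k := 3) hρ (by linarith : 0 < 3 * r)
        (by linarith [le_max_right ‖c‖ r])]
    · linarith [fLogProfile_anti hρ hρ3, posLog_nonneg (x := 3)]

theorem abs_setAverage_fLogProfile_norm_sub_le (c : E) {r : ℝ} (hr : 0 < r) :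
    |⨍ x in ball c r, fLogProfile ‖x‖ ∂μ - fLogProfile (max ‖c‖ r)| ≤
      2 * 3 ^ finrank ℝ E := by
  obtain ⟨a, ha, havg⟩ := exists_setAverage_abs_fLogProfile_norm_sub_le μ c hr
  have := abs_setAverage_sub_le (measure_ball_pos μ c hr).ne' measure_ball_lt_top.ne
    (integrableOn_fLogProfile_norm μ c r) a
  linarith [abs_sub_le (⨍ x in ball c r, fLogProfile ‖x‖ ∂μ) a (fLogProfile (max ‖c‖ r))]

theorem setAverage_abs_fLogProfile_norm_sub_setAverage_le (c : E) {r : ℝ} (hr : 0 < r) :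
    ⨍ x in ball c r, |fLogProfile ‖x‖ - ⨍ y in ball c r, fLogProfile ‖y‖ ∂μ| ∂μ ≤
      2 * 3 ^ finrank ℝ E := by
  obtain ⟨a, -, havg⟩ := exists_setAverage_abs_fLogProfile_norm_sub_le μ c hr
  linarith [setAverage_abs_sub_setAverage_le (measure_ball_pos μ c hr).ne' measure_ball_lt_top.ne
    (integrableOn_fLogProfile_norm μ c r) a]

theorem abs_setAverage_fLogProfile_norm_sub_setAverage_div_le {x₁ x₂ : E} {r₁ r₂ : ℝ} (hr₂ : 0 < r₂)
    (hr₁ : r₁ ≤ 1) (h : ball x₂ (2 * r₂) ⊆ ball x₁ r₁) :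
    |⨍ x in ball x₂ r₂, fLogProfile ‖x‖ ∂μ - ⨍ x in ball x₁ r₁, fLogProfile ‖x‖ ∂μ| /
      (1 + log ((1 - log r₂) / (1 - log r₁))) ≤ 5 * 3 ^ finrank ℝ E := by
  have hd := dist_add_le_of_ball_subset (by positivity) h
  have hr₂₁ : r₂ ≤ r₁ := by linarith [dist_nonneg (x := x₂) (y := x₁)]
  rw [← fLogProfile_sub_fLogProfile hr₂ hr₂₁ hr₁]
  have hL : 0 ≤ fLogProfile r₂ - fLogProfile r₁ := sub_nonneg.2 (fLogProfile_anti hr₂ hr₂₁)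
  have hM : 1 ≤ (3 : ℝ) ^ finrank ℝ E := one_le_pow₀ (by norm_num)
  have hlog2 : log⁺ 2 ≤ (3 : ℝ) ^ finrank ℝ E :=
    (posLog_le_posLog (by norm_num) (by norm_num)).trans
      (posLog_three_le_three_pow finrank_pos.ne')
  have h₂ := abs_setAverage_fLogProfile_norm_sub_le μ x₂ hr₂
  have h₁ := abs_setAverage_fLogProfile_norm_sub_le μ x₁ (hr₂.trans_le hr₂₁)
  rw [abs_sub_comm] at h₁
  have hρ := abs_fLogProfile_max_sub_le hr₂ hd
  rw [div_le_iff₀ (by linarith)]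
  refine (abs_sub_le _ (fLogProfile (max ‖x₂‖ r₂)) _).trans ?_
  have := abs_sub_le (fLogProfile (max ‖x₂‖ r₂)) (fLogProfile (max ‖x₁‖ r₁))
    (⨍ x in ball x₁ r₁, fLogProfile ‖x‖ ∂μ)
  nlinarith [mul_nonneg hL (sub_nonneg.2 hM)]

theorem not_memLp_top_fLogProfile_norm : ¬ MemLp (fun x : E => fLogProfile ‖x‖) ⊤ μ := by
  intro hf
  obtain ⟨C, hC⟩ := eLpNormEssSup_lt_top_iff_isBoundedUnder.1
    (by simpa only [eLpNorm_exponent_top] using hf.2)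
  have hlarge : ∀ᶠ x in 𝓝[≠] (0 : E), (C : ℝ) < fLogProfile ‖x‖ :=
    (tendsto_fLogProfile_nhdsGT_zero.comp tendsto_norm_nhdsNE_zero).eventually_gt_atTop _
  obtain ⟨U, hU, hUsub⟩ := mem_nhdsWithin_iff_exists_mem_nhds_inter.1 hlarge
  obtain ⟨x, hxU, hxC, hx0⟩ := Measure.exists_mem_of_measure_ne_zero_of_ae
    (Measure.measure_pos_of_mem_nhds μ hU).ne'
    (ae_restrict_of_ae ((eventually_map.1 hC).and (Measure.ae_ne μ 0)))
  have hbound : fLogProfile ‖x‖ ≤ C := (le_abs_self _).trans (NNReal.coe_le_coe.2 hxC)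
  exact (hUsub ⟨hxU, hx0⟩).not_ge hbound

end NormedSpace

/-- `fLog` is not essentially bounded but has finite LBMO norm; in particular
the inclusion `L^∞ ⊆ LBMO` is strict. -/
theorem fLog_unbounded_but_lbmo :
    ¬ MemLp fLog ⊤ volume ∧ lbmoNorm fLog ≠ ⊤ := by
  refine ⟨fLog_eq_fLogProfile_norm ▸ not_memLp_top_fLogProfile_norm volume, ?_⟩
  have hbmo : bmoNorm fLog ≤ ENNReal.ofReal (2 * 3 ^ finrank ℝ E2) := by
    simp only [bmoNorm, avg, fLog_eq_fLogProfile_norm, iSup_le_iff]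
    exact fun c r hr => ENNReal.ofReal_le_ofReal
      (setAverage_abs_fLogProfile_norm_sub_setAverage_le volume c hr)
  have hsup : lbmoSup fLog ≤ ENNReal.ofReal (5 * 3 ^ finrank ℝ E2) := by
    simp only [lbmoSup, avg, fLog_eq_fLogProfile_norm, iSup_le_iff]
    exact fun x₁ x₂ r₁ r₂ hr₂ _ hr₁ h => ENNReal.ofReal_le_ofReal
      (abs_setAverage_fLogProfile_norm_sub_setAverage_div_le volume hr₂ hr₁ h)
  exact ne_top_of_le_ne_top (ENNReal.add_ne_top.2 ⟨ENNReal.ofReal_ne_top, ENNReal.ofReal_ne_top⟩)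
    (add_le_add hbmo hsup)
end
end

section
/- Define f : ℝ² → ℝ by f(x) = ln(1 − ln|x|) for 0 < |x| ≤ 1 and f(x) = 0 for |x| > 1. Then for every 0 < r ≤ 1, the average of f over the ball B(0,r) satisfies 0 ≤ av_{B(0,r)}(f) − ln(1 − ln r) ≤ 1. -/
open MeasureTheory Metric Real
open scoped ENNReal

noncomputable section

/-!
In polar coordinates, `av_{B(0,r)} f = (2 / r²) ∫₀^r s ln(1 - ln s) ds`. Integrating by parts
against `d(s²)` turns this into `ln(1 - ln r) + r⁻² ∫₀^r s / (1 - ln s) ds`, and since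
`1 - ln s ≥ 1` on `(0, 1]` the last term lies in `[0, 1/2]`.
-/

open Set Filter Topology Module

section Radial

variable {E : Type*} [NormedAddCommGroup E] [NormedSpace ℝ E] [FiniteDimensional ℝ E]
  [Nontrivial E] [MeasurableSpace E] [BorelSpace E] (μ : Measure E) [μ.IsAddHaarMeasure]

theorem setIntegral_ball_fun_norm (g : ℝ → ℝ) (r : ℝ) :
    ∫ x in ball (0 : E) r, g ‖x‖ ∂μ =
      finrank ℝ E * μ.real (ball 0 1) * ∫ y in Ioo 0 r, y ^ (finrank ℝ E - 1) * g y := by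
  have hind : (ball (0 : E) r).indicator (fun x => g ‖x‖) = fun x => (Iio r).indicator g ‖x‖ := by
    ext x; simp [indicator]
  have hradial : ∫ y in Ioi 0, y ^ (finrank ℝ E - 1) • (Iio r).indicator g y =
      ∫ y in Ioo 0 r, y ^ (finrank ℝ E - 1) * g y := by
    rw [← Ioi_inter_Iio, ← setIntegral_indicator measurableSet_Iio]
    congr 1; ext y; by_cases hy : y < r <;> simp [hy]
  rw [← integral_indicator measurableSet_ball, hind, integral_fun_norm_addHaar, hradial,
    nsmul_eq_mul, smul_eq_mul, mul_assoc]

theorem setAverage_ball_fun_norm (g : ℝ → ℝ) {r : ℝ} (hr : 0 < r) :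
    ⨍ x in ball (0 : E) r, g ‖x‖ ∂μ =
      finrank ℝ E / r ^ finrank ℝ E * ∫ y in Ioo 0 r, y ^ (finrank ℝ E - 1) * g y := by
  have hunit : μ.real (ball 0 1) ≠ 0 :=
    (ENNReal.toReal_pos (measure_ball_pos μ 0 one_pos).ne' measure_ball_lt_top.ne).ne'
  rw [setAverage_eq, setIntegral_ball_fun_norm, measureReal_def, Measure.addHaar_ball μ _ hr.le,
    ENNReal.toReal_mul, ENNReal.toReal_ofReal (by positivity), ← measureReal_def, smul_eq_mul]
  field_simp

end Radial

lemma intervalIntegrable_of_norm_le {f : ℝ → ℝ} {a b M : ℝ} (hab : a ≤ b) (hf : Measurable f)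
    (hbound : ∀ y ∈ Ioc a b, ‖f y‖ ≤ M) : IntervalIntegrable f volume a b := by
  rw [intervalIntegrable_iff_integrableOn_Ioc_of_le hab]
  exact Measure.integrableOn_of_bounded measure_Ioc_lt_top.ne hf.aestronglyMeasurable <|
    (ae_restrict_iff' measurableSet_Ioc).2 (.of_forall hbound)

section OneSubLog

variable {s r : ℝ}

lemma one_le_one_sub_log (hs0 : 0 ≤ s) (hs1 : s ≤ 1) : 1 ≤ 1 - log s := by
  linarith [log_nonpos hs0 hs1]

lemma log_one_sub_log_nonneg (hs0 : 0 ≤ s) (hs1 : s ≤ 1) : 0 ≤ log (1 - log s) :=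
  log_nonneg (one_le_one_sub_log hs0 hs1)

lemma mul_log_one_sub_log_le_one (hs0 : 0 < s) (hs1 : s ≤ 1) : s * log (1 - log s) ≤ 1 := by
  have h1 : log (1 - log s) ≤ -log s := by
    linarith [log_le_sub_one_of_pos (zero_lt_one.trans_le (one_le_one_sub_log hs0.le hs1))]
  have h2 : -log s ≤ s⁻¹ - 1 := by
    rw [← log_inv]; exact log_le_sub_one_of_pos (inv_pos.2 hs0)
  calc s * log (1 - log s) ≤ s * (s⁻¹ - 1) := by gcongr; linarith
    _ = 1 - s := by field_simp
    _ ≤ 1 := by linarith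

lemma hasDerivAt_sq_mul_log_one_sub_log (hs : s ≠ 0) (hlog : 1 - log s ≠ 0) :
    HasDerivAt (fun t => t ^ 2 * log (1 - log t))
      (2 * s * log (1 - log s) - s / (1 - log s)) s := by
  have hinner : HasDerivAt (fun t => 1 - log t) (-s⁻¹) s := by
    simpa using (hasDerivAt_log hs).const_sub 1
  refine ((hasDerivAt_pow 2 s).fun_mul (hinner.log hlog)).congr_deriv ?_
  field_simp
  ring

lemma tendsto_sq_mul_log_one_sub_log_nhdsGT_zero :
    Tendsto (fun t => t ^ 2 * log (1 - log t)) (𝓝[>] 0) (𝓝 0) := by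
  have hIoo : Ioo (0 : ℝ) 1 ∈ 𝓝[>] 0 := Ioo_mem_nhdsGT one_pos
  refine squeeze_zero' ?_ ?_ (tendsto_nhdsWithin_of_tendsto_nhds tendsto_id)
  · filter_upwards [hIoo] with t ht
    have := log_one_sub_log_nonneg ht.1.le ht.2.le
    positivity
  · filter_upwards [hIoo] with t ht
    have := mul_log_one_sub_log_le_one ht.1 ht.2.le
    calc t ^ 2 * log (1 - log t) = t * (t * log (1 - log t)) := by ring
      _ ≤ t * 1 := by gcongr; exact ht.1.le
      _ = id t := mul_one t

lemma intervalIntegrable_mul_log_one_sub_log (hr0 : 0 ≤ r) (hr1 : r ≤ 1) :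
    IntervalIntegrable (fun y => y * log (1 - log y)) volume 0 r := by
  refine intervalIntegrable_of_norm_le (M := 1) hr0 (by fun_prop) fun y hy => ?_
  have hy1 := hy.2.trans hr1
  rw [norm_of_nonneg (mul_nonneg hy.1.le (log_one_sub_log_nonneg hy.1.le hy1))]
  exact mul_log_one_sub_log_le_one hy.1 hy1

lemma intervalIntegrable_div_one_sub_log (hr0 : 0 ≤ r) (hr1 : r ≤ 1) :
    IntervalIntegrable (fun y => y / (1 - log y)) volume 0 r := by
  refine intervalIntegrable_of_norm_le (M := 1) hr0 (by fun_prop) fun y hy => ?_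
  have hy1 := hy.2.trans hr1
  have hlog := one_le_one_sub_log hy.1.le hy1
  rw [norm_of_nonneg (div_nonneg hy.1.le (by linarith))]
  exact (div_le_one (by linarith)).2 (by linarith)

-- The boundary term at `0` vanishes because `t² ln(1 - ln t) ≤ t` near `0`.
theorem integral_mul_log_one_sub_log (hr0 : 0 < r) (hr1 : r ≤ 1) :
    ∫ y in 0..r, y * log (1 - log y) =
      (r ^ 2 * log (1 - log r) + ∫ y in 0..r, y / (1 - log y)) / 2 := by
  have hderiv : ∀ s ∈ Ioo 0 r, HasDerivAt (fun t => t ^ 2 * log (1 - log t))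
      (2 * s * log (1 - log s) - s / (1 - log s)) s := fun s hs =>
    hasDerivAt_sq_mul_log_one_sub_log hs.1.ne'
      (one_pos.trans_le (one_le_one_sub_log hs.1.le (hs.2.le.trans hr1))).ne'
  have hint := intervalIntegrable_mul_log_one_sub_log hr0.le hr1
  have hint' := intervalIntegrable_div_one_sub_log hr0.le hr1
  have hFTC := intervalIntegral.integral_eq_sub_of_hasDerivAt_of_tendsto hr0 hderiv
    ((hint.const_mul 2).sub hint' |>.congr fun _ _ => by simp only [mul_assoc])
    tendsto_sq_mul_log_one_sub_log_nhdsGT_zero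
    ((hasDerivAt_sq_mul_log_one_sub_log hr0.ne'
      (one_pos.trans_le (one_le_one_sub_log hr0.le hr1)).ne').continuousAt.tendsto.mono_left
      nhdsWithin_le_nhds)
  simp only [mul_assoc] at hFTC
  rw [intervalIntegral.integral_sub (hint.const_mul 2) hint', intervalIntegral.integral_const_mul]
    at hFTC
  linarith

lemma integral_div_one_sub_log_mem_Icc (hr0 : 0 ≤ r) (hr1 : r ≤ 1) :
    ∫ y in 0..r, y / (1 - log y) ∈ Icc 0 (r ^ 2 / 2) := by
  have hlog : ∀ y ∈ Icc 0 r, 1 ≤ 1 - log y := fun y hy => one_le_one_sub_log hy.1 (hy.2.trans hr1)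
  refine ⟨intervalIntegral.integral_nonneg hr0 fun y hy => div_nonneg hy.1 (by linarith [hlog y hy]),
    ?_⟩
  calc ∫ y in 0..r, y / (1 - log y) ≤ ∫ y in 0..r, y :=
        intervalIntegral.integral_mono_on hr0 (intervalIntegrable_div_one_sub_log hr0 hr1)
          intervalIntegral.intervalIntegrable_id fun y hy => div_le_self hy.1 (hlog y hy)
    _ = r ^ 2 / 2 := by simp [integral_id]

end OneSubLog

-- At `x = 0` both sides vanish, since `log 0 = 0` in Mathlib.
lemma fLog_eq_of_norm_le_one {x : E2} (hx : ‖x‖ ≤ 1) : fLog x = log (1 - log ‖x‖) := by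
  by_cases h : x = 0 <;> simp [fLog, hx, h]

lemma avg_fLog_zero (r : ℝ) (hr0 : 0 < r) (hr1 : r ≤ 1) :
    avg fLog 0 r = 2 / r ^ 2 * ∫ y in 0..r, y * log (1 - log y) := by
  have hball : avg fLog 0 r = ⨍ x in ball (0 : E2) r, log (1 - log ‖x‖) :=
    setAverage_congr_fun measurableSet_ball <| .of_forall fun x hx =>
      fLog_eq_of_norm_le_one ((mem_ball_zero_iff.1 hx).le.trans hr1)
  rw [hball, setAverage_ball_fun_norm _ (fun s => log (1 - log s)) hr0, finrank_euclideanSpace_fin,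
    intervalIntegral.integral_of_le hr0.le, integral_Ioc_eq_integral_Ioo]
  norm_num

/-- sharp two-sided estimate of the averages of `fLog` on balls centered at
the origin: `0 ≤ av_{B(0,r)}(f) - ln(1 - ln r) ≤ 1` for `0 < r ≤ 1`. -/
theorem fLog_average_estimate (r : ℝ) (hr0 : 0 < r) (hr1 : r ≤ 1) :
    0 ≤ avg fLog 0 r - Real.log (1 - Real.log r) ∧
    avg fLog 0 r - Real.log (1 - Real.log r) ≤ 1 := by
  obtain ⟨hJ0, hJ1⟩ := integral_div_one_sub_log_mem_Icc hr0.le hr1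
  have havg : avg fLog 0 r - log (1 - log r) = (∫ y in 0..r, y / (1 - log y)) / r ^ 2 := by
    rw [avg_fLog_zero r hr0 hr1, integral_mul_log_one_sub_log hr0 hr1]
    field_simp
    ring
  rw [havg]
  exact ⟨by positivity, (div_le_one (by positivity)).2 (by linarith)⟩
end
end

section
/- For every C₁ > 0 there exists C₂ > 0 such that the following holds. Let M ≥ 1, 0 < r ≤ 1, and let (u_k)_{k∈ℕ} be nonnegative reals with Σ_{k≥0} u_k ≤ π r² and u_k ≤ C₁ e^{−k/M} r^{1+1/M} for every k ∈ ℕ. Then (1/(π r²)) Σ_{k≥0} u_k (1 + ln((k + 2 − ln r)/(1 − ln r))) ≤ C₂ (1 + ln(1 + M)). -/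
/-!
Split the sum at `k ≈ 2M (2 ln(1 + M) + ln(1/r))`. Below this threshold the weight
`1 + ln((k + 2 - ln r)/(1 - ln r))` is at most `3 + 2 ln(1 + M)`, so these terms contribute at
most that multiple of `∑ u_k ≤ π r²`. Above it, half of the decay `e^{-k/M}` is already smaller
than `r/(1 + M)²`; this extra factor `r` compensates the missing `r^{1 - 1/M}` in the pointwise
bound, and `(1 + M)⁻²` absorbs the geometric sum `∑ (k + 2) e^{-k/(2M)} ≤ 2 (1 + 2M)²`, so the
tail is `O(C₁ r²)`.
-/

open Real

theorem hasSum_coe_add_mul_geometric {𝕜 : Type*} [NormedField 𝕜] [CompleteSpace 𝕜] (a : 𝕜)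
    {q : 𝕜} (hq : ‖q‖ < 1) :
    HasSum (fun k : ℕ => ((k : 𝕜) + a) * q ^ k) (q / (1 - q) ^ 2 + a * (1 - q)⁻¹) := by
  simpa only [add_mul] using (hasSum_coe_mul_geometric_of_norm_lt_one hq).add
    ((hasSum_geometric_of_norm_lt_one hq).mul_left a)

theorem inv_one_sub_exp_neg_le {x : ℝ} (hx : 0 < x) : (1 - exp (-x))⁻¹ ≤ 1 + x⁻¹ := by
  have hpos : 0 < 1 - exp (-x) := by linarith [exp_lt_one_iff.mpr (neg_lt_zero.mpr hx)]
  have hexp : exp (-x) * (1 + x) ≤ 1 := by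
    rw [exp_neg, inv_mul_le_iff₀ (exp_pos x)]
    linarith [add_one_le_exp x]
  rw [inv_le_iff_one_le_mul₀ hpos]
  calc (1 : ℝ) ≤ 1 + x⁻¹ * (1 - exp (-x) * (1 + x)) := by
        have : 0 ≤ x⁻¹ * (1 - exp (-x) * (1 + x)) := mul_nonneg (by positivity) (by linarith)
        linarith
    _ = (1 + x⁻¹) * (1 - exp (-x)) := by field_simp; ring

theorem exists_hasSum_coe_add_two_mul_exp_neg_le {x : ℝ} (hx : 0 < x) :
    ∃ S, HasSum (fun k : ℕ => ((k : ℝ) + 2) * exp (-(k * x))) S ∧ S ≤ 2 * (1 + x⁻¹) ^ 2 := by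
  set q := exp (-x)
  have hq0 : 0 < q := exp_pos _
  have hq1 : q < 1 := exp_lt_one_iff.mpr (neg_lt_zero.mpr hx)
  refine ⟨q / (1 - q) ^ 2 + 2 * (1 - q)⁻¹, ?_, ?_⟩
  · simpa only [q, ← exp_nat_mul, mul_neg] using
      hasSum_coe_add_mul_geometric (2 : ℝ) (q := q) (by rwa [norm_of_nonneg hq0.le])
  · have hinv := inv_one_sub_exp_neg_le hx
    have h1q : 0 < 1 - q := by linarith
    calc q / (1 - q) ^ 2 + 2 * (1 - q)⁻¹ = (2 - q) * ((1 - q)⁻¹) ^ 2 := by field_simp; ring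
      _ ≤ 2 * (1 + x⁻¹) ^ 2 := by gcongr; linarith

section Weight

variable {ℓ t : ℝ}

theorem one_le_add_two_sub_div_one_sub (hℓ : ℓ ≤ 0) (ht : 0 ≤ t) :
    1 ≤ (t + 2 - ℓ) / (1 - ℓ) := by
  rw [one_le_div (by linarith)]
  linarith

theorem one_add_log_add_two_sub_div_one_sub_le (hℓ : ℓ ≤ 0) (ht : 0 ≤ t) :
    1 + log ((t + 2 - ℓ) / (1 - ℓ)) ≤ t + 2 := by
  have hle : (t + 2 - ℓ) / (1 - ℓ) ≤ t + 2 := by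
    rw [div_le_iff₀ (by linarith)]
    nlinarith
  linarith [log_le_sub_one_of_pos (one_pos.trans_le (one_le_add_two_sub_div_one_sub hℓ ht))]

theorem one_add_log_add_two_sub_div_one_sub_le_of_le {M : ℝ} (hℓ : ℓ ≤ 0) (ht : 0 ≤ t)
    (hM : 0 ≤ M) (htM : t ≤ 2 * M * (2 * log (1 + M) - ℓ)) :
    1 + log ((t + 2 - ℓ) / (1 - ℓ)) ≤ 3 + 2 * log (1 + M) := by
  have hlogM : log (1 + M) ≤ M := by linarith [log_le_sub_one_of_pos (by linarith : 0 < 1 + M)]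
  have hle : (t + 2 - ℓ) / (1 - ℓ) ≤ 4 * (1 + M) ^ 2 := by
    rw [div_le_iff₀ (by linarith)]
    nlinarith [mul_le_mul_of_nonneg_left hlogM hM,
      mul_nonneg (neg_nonneg.mpr hℓ) (by nlinarith : 0 ≤ 4 * (1 + M) ^ 2 - 2 * M - 1)]
  have hlog4 : log 4 < 2 := by
    rw [show (4 : ℝ) = 2 ^ 2 by norm_num, log_pow]
    norm_num
    linarith [log_two_lt_d9]
  calc 1 + log ((t + 2 - ℓ) / (1 - ℓ)) ≤ 1 + log (4 * (1 + M) ^ 2) := by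
        gcongr
        exact one_pos.trans_le (one_le_add_two_sub_div_one_sub hℓ ht)
    _ = 1 + log 4 + 2 * log (1 + M) := by
        rw [log_mul (by norm_num) (by positivity), log_pow]; push_cast; ring
    _ ≤ 3 + 2 * log (1 + M) := by linarith

end Weight

theorem exp_neg_div_le_of_le {M r t : ℝ} (hM : 0 < M) (hr : 0 < r)
    (ht : 2 * M * (2 * log (1 + M) - log r) ≤ t) :
    exp (-t / M) ≤ r / (1 + M) ^ 2 * exp (-(t * (2 * M)⁻¹)) := by
  have hhalf : exp (-(t * (2 * M)⁻¹)) ≤ r / (1 + M) ^ 2 := by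
    have hval : exp (log r - 2 * log (1 + M)) = r / (1 + M) ^ 2 := by
      rw [exp_sub, exp_log hr, show 2 * log (1 + M) = log ((1 + M) ^ 2) by norm_num [log_pow],
        exp_log (by positivity)]
    rw [← hval, exp_le_exp, neg_le, ← div_eq_mul_inv, le_div_iff₀ (by positivity)]
    linarith
  calc exp (-t / M) = exp (-(t * (2 * M)⁻¹)) * exp (-(t * (2 * M)⁻¹)) := by
        rw [← exp_add]; congr 1; field_simp; ring
    _ ≤ r / (1 + M) ^ 2 * exp (-(t * (2 * M)⁻¹)) := by gcongr

section Summation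

variable {C₁ M r : ℝ}

theorem mul_one_add_log_le {t u : ℝ} (hC₁ : 0 ≤ C₁) (hM : 0 < M) (hr0 : 0 < r) (hr1 : r ≤ 1)
    (ht : 0 ≤ t) (hu0 : 0 ≤ u) (hu : u ≤ C₁ * exp (-t / M) * r ^ (1 + 1 / M)) :
    u * (1 + log ((t + 2 - log r) / (1 - log r))) ≤
      (3 + 2 * log (1 + M)) * u +
        C₁ * r ^ 2 / (1 + M) ^ 2 * ((t + 2) * exp (-(t * (2 * M)⁻¹))) := by
  have hlog : log r ≤ 0 := log_nonpos hr0.le hr1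
  have hB : 0 ≤ C₁ * r ^ 2 / (1 + M) ^ 2 * ((t + 2) * exp (-(t * (2 * M)⁻¹))) := by positivity
  have hA : 0 ≤ (3 + 2 * log (1 + M)) * u :=
    mul_nonneg (by linarith [log_nonneg (by linarith : (1 : ℝ) ≤ 1 + M)]) hu0
  rcases le_or_gt t (2 * M * (2 * log (1 + M) - log r)) with hbulk | htail
  · calc u * (1 + log ((t + 2 - log r) / (1 - log r))) ≤ (3 + 2 * log (1 + M)) * u := by
          rw [mul_comm]
          exact mul_le_mul_of_nonneg_right
            (one_add_log_add_two_sub_div_one_sub_le_of_le hlog ht hM.le hbulk) hu0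
      _ ≤ _ := le_add_of_nonneg_right hB
  · have hrpow : r ^ (1 + 1 / M) ≤ r := by
      simpa using rpow_le_rpow_of_exponent_ge hr0 hr1
        (le_add_of_nonneg_right (one_div_pos.mpr hM).le : (1 : ℝ) ≤ 1 + 1 / M)
    calc u * (1 + log ((t + 2 - log r) / (1 - log r))) ≤ u * (t + 2) :=
          mul_le_mul_of_nonneg_left (one_add_log_add_two_sub_div_one_sub_le hlog ht) hu0
      _ ≤ C₁ * exp (-t / M) * r ^ (1 + 1 / M) * (t + 2) := by gcongr
      _ ≤ C₁ * (r / (1 + M) ^ 2 * exp (-(t * (2 * M)⁻¹))) * r * (t + 2) := by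
          gcongr
          exact exp_neg_div_le_of_le hM hr0 htail.le
      _ = C₁ * r ^ 2 / (1 + M) ^ 2 * ((t + 2) * exp (-(t * (2 * M)⁻¹))) := by ring
      _ ≤ _ := le_add_of_nonneg_left hA

theorem tsum_mul_one_add_log_le {u : ℕ → ℝ} (hC₁ : 0 ≤ C₁) (hM : 0 < M) (hr0 : 0 < r)
    (hr1 : r ≤ 1) (hu0 : ∀ k, 0 ≤ u k)
    (hu : ∀ k : ℕ, u k ≤ C₁ * exp (-(k : ℝ) / M) * r ^ (1 + 1 / M)) :
    ∑' k : ℕ, u k * (1 + log (((k : ℝ) + 2 - log r) / (1 - log r))) ≤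
      (3 + 2 * log (1 + M)) * ∑' k, u k + 8 * C₁ * r ^ 2 := by
  set A := 3 + 2 * log (1 + M)
  set B := C₁ * r ^ 2 / (1 + M) ^ 2 with hB
  obtain ⟨S, hS, hS_le⟩ := exists_hasSum_coe_add_two_mul_exp_neg_le (x := (2 * M)⁻¹) (by positivity)
  have hu_summable : Summable u := by
    refine .of_nonneg_of_le hu0 (fun k => (hu k).trans_eq ?_)
      ((summable_exp_nat_mul_iff.mpr (neg_lt_zero.mpr (inv_pos.mpr hM))).mul_left
        (C₁ * r ^ (1 + 1 / M)))
    rw [mul_right_comm]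
    congr 2
    ring
  have hpoint k := mul_one_add_log_le hC₁ hM hr0 hr1 (Nat.cast_nonneg k) (hu0 k) (hu k)
  have hmajorant := (hu_summable.mul_left A).add (hS.summable.mul_left B)
  have hweight (k : ℕ) : 0 ≤ 1 + log (((k : ℝ) + 2 - log r) / (1 - log r)) := by
    linarith [log_nonneg (one_le_add_two_sub_div_one_sub (log_nonpos hr0.le hr1) k.cast_nonneg)]
  have hsummable := Summable.of_nonneg_of_le (fun k => mul_nonneg (hu0 k) (hweight k))
    hpoint hmajorant
  have hBS : B * S ≤ 8 * C₁ * r ^ 2 := by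
    calc B * S ≤ B * (2 * (1 + ((2 * M)⁻¹)⁻¹) ^ 2) := by gcongr
      _ = 2 * C₁ * r ^ 2 * ((1 + 2 * M) / (1 + M)) ^ 2 := by rw [inv_inv, hB]; field_simp
      _ ≤ 2 * C₁ * r ^ 2 * 2 ^ 2 := by
          gcongr
          rw [div_le_iff₀ (by linarith)]
          linarith
      _ = 8 * C₁ * r ^ 2 := by ring
  calc _ ≤ ∑' k, (A * u k + B * (((k : ℝ) + 2) * exp (-(k * (2 * M)⁻¹)))) :=
        hsummable.tsum_le_tsum hpoint hmajorant
    _ = A * ∑' k, u k + B * S := by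
        rw [(hu_summable.mul_left A).tsum_add (hS.summable.mul_left B), tsum_mul_left,
          tsum_mul_left, hS.tsum_eq]
    _ ≤ A * ∑' k, u k + 8 * C₁ * r ^ 2 := by linarith

end Summation

/-- summation estimate for the Whitney pieces. -/
theorem whitney_summation_estimate :
    ∀ C₁ > (0:ℝ), ∃ C₂ > (0:ℝ), ∀ M ≥ (1:ℝ), ∀ r : ℝ, 0 < r → r ≤ 1 →
      ∀ u : ℕ → ℝ, (∀ k, 0 ≤ u k) → (∑' k, u k) ≤ π * r ^ 2 →
        (∀ k : ℕ, u k ≤ C₁ * Real.exp (-(k : ℝ) / M) * r ^ (1 + 1 / M)) →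
        (1 / (π * r ^ 2)) *
            ∑' k : ℕ, u k * (1 + Real.log (((k : ℝ) + 2 - Real.log r) / (1 - Real.log r))) ≤
          C₂ * (1 + Real.log (1 + M)) := by
  intro C₁ hC₁
  refine ⟨3 + 3 * C₁, by positivity, ?_⟩
  intro M hM r hr0 hr1 u hu0 hsum hu
  have hlogM : 0 ≤ log (1 + M) := log_nonneg (by linarith)
  have hπr : 0 < π * r ^ 2 := by positivity
  have hbound := tsum_mul_one_add_log_le hC₁.le (by linarith) hr0 hr1 hu0 hu
  rw [one_div_mul_eq_div, div_le_iff₀ hπr]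
  calc _ ≤ (3 + 2 * log (1 + M)) * (π * r ^ 2) + 8 * C₁ * r ^ 2 := by
        linarith [mul_le_mul_of_nonneg_left hsum (by linarith : 0 ≤ 3 + 2 * log (1 + M))]
    _ ≤ (3 + 3 * C₁) * (1 + log (1 + M)) * (π * r ^ 2) := by
        nlinarith [pi_gt_three, mul_nonneg (mul_nonneg hC₁.le hlogM) hπr.le,
          mul_nonneg hlogM hπr.le, mul_nonneg hC₁.le (sq_nonneg r)]
end
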